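/- arXiv:1308.5180 — 8 statements merged into one kernel-verified Lean document; each statement's English description precedes it below -/
import Mathlib

section
/- Let m ≥ 2 be an integer, let d > K ≥ 1 be real numbers and set a = (d/K)^{1/(m-1)}, b = (dK)^{1/(m-1)}. Let h : ℝ^m → ℝ^m be a map and suppose there are reals R0 ≥ 1, C1 > 0, C2 > 0 with C1·R0^{a-1} > 1 such that C1·‖x‖^a ≤ ‖h(x)‖ ≤ C2·‖x‖^b for all x with ‖x‖ > R0. Then for every integer j ≥ 1 and every x with ‖x‖ > R0 one has ‖h^j(x)‖ > R0 and C1^{q_j(a)}·‖x‖^{a^j} ≤ ‖h^j(x)‖ ≤ C2^{q_j(b)}·‖x‖^{b^j}, where h^j denotes the j-th iterate of h. -/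
/-- Iteration of one-step growth bounds near infinity (Lemma 2.3 iteration step):
if `C1·‖x‖^a ≤ ‖h x‖ ≤ C2·‖x‖^b` for `‖x‖ > R0`, then for every `j ≥ 1` and `‖x‖ > R0`,
`‖h^j x‖ > R0` and `C1^{q_j(a)}·‖x‖^{a^j} ≤ ‖h^j x‖ ≤ C2^{q_j(b)}·‖x‖^{b^j}`,
where `q_j(y) = 1 + y + ⋯ + y^{j-1}`. -/
theorem iterated_growth_bounds {m : ℕ} (hm : 2 ≤ m) (d K : ℝ) (hK : 1 ≤ K) (hdK : K < d)
    (a b : ℝ) (ha : a = (d / K) ^ ((1 : ℝ) / ((m : ℝ) - 1)))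
    (hb : b = (d * K) ^ ((1 : ℝ) / ((m : ℝ) - 1)))
    (h : EuclideanSpace ℝ (Fin m) → EuclideanSpace ℝ (Fin m))
    (R0 C1 C2 : ℝ) (hR0 : 1 ≤ R0) (hC1 : 0 < C1) (hC2 : 0 < C2)
    (hbig : 1 < C1 * R0 ^ (a - 1))
    (hlow : ∀ x : EuclideanSpace ℝ (Fin m), R0 < ‖x‖ → C1 * ‖x‖ ^ a ≤ ‖h x‖)
    (hup : ∀ x : EuclideanSpace ℝ (Fin m), R0 < ‖x‖ → ‖h x‖ ≤ C2 * ‖x‖ ^ b) :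
    ∀ j : ℕ, 1 ≤ j → ∀ x : EuclideanSpace ℝ (Fin m), R0 < ‖x‖ →
      R0 < ‖h^[j] x‖ ∧
      C1 ^ (∑ i ∈ Finset.range j, a ^ i) * ‖x‖ ^ (a ^ j) ≤ ‖h^[j] x‖ ∧
      ‖h^[j] x‖ ≤ C2 ^ (∑ i ∈ Finset.range j, b ^ i) * ‖x‖ ^ (b ^ j) := by
  have hm1 : (1 : ℝ) ≤ (m : ℝ) - 1 := by
    have : (2 : ℝ) ≤ (m : ℝ) := by exact_mod_cast hm
    linarith
  have hexp : 0 < (1 : ℝ) / ((m : ℝ) - 1) := by positivity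
  have hK0 : 0 < K := by linarith
  have ha1 : 1 < a := by
    rw [ha]
    exact Real.one_lt_rpow_iff_of_pos (div_pos (by linarith) hK0) |>.2
      (Or.inl ⟨(one_lt_div hK0).2 hdK, hexp⟩)
  have hb1 : 1 < b := by
    rw [hb]
    refine Real.one_lt_rpow_iff_of_pos (by nlinarith) |>.2 (Or.inl ⟨?_, hexp⟩)
    nlinarith
  have hR0' : 0 < R0 := by linarith
  -- one-step escape
  have step : ∀ y : EuclideanSpace ℝ (Fin m), R0 < ‖y‖ → R0 < ‖h y‖ := by
    intro y hy
    have hy0 : 0 < ‖y‖ := lt_trans hR0' hy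
    have h1 : C1 * ‖y‖ ^ a ≤ ‖h y‖ := hlow y hy
    have h2 : R0 ^ (a - 1) ≤ ‖y‖ ^ (a - 1) :=
      Real.rpow_le_rpow (le_of_lt hR0') (le_of_lt hy) (by linarith)
    have h3 : ‖y‖ ^ (a - 1) * ‖y‖ = ‖y‖ ^ a := by
      rw [← Real.rpow_add_one hy0.ne']
      norm_num
    calc R0 < ‖y‖ := hy
      _ = 1 * ‖y‖ := (one_mul _).symm
      _ < C1 * R0 ^ (a - 1) * ‖y‖ := mul_lt_mul_of_pos_right hbig hy0
      _ ≤ C1 * ‖y‖ ^ (a - 1) * ‖y‖ :=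
          mul_le_mul_of_nonneg_right (mul_le_mul_of_nonneg_left h2 hC1.le) hy0.le
      _ = C1 * (‖y‖ ^ (a - 1) * ‖y‖) := by ring
      _ = C1 * ‖y‖ ^ a := by rw [h3]
      _ ≤ ‖h y‖ := h1
  intro j hj
  induction j, hj using Nat.le_induction with
  | base =>
    intro x hx
    have hx0 : 0 < ‖x‖ := lt_trans hR0' hx
    simp only [Function.iterate_one, Finset.sum_range_one, pow_zero, pow_one,
      Real.rpow_one]
    exact ⟨step x hx, hlow x hx, hup x hx⟩
  | succ j hj IH =>
    intro x hx
    obtain ⟨hy, hlo, hhi⟩ := IH x hx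
    set y := h^[j] x with hydef
    have hx0 : 0 < ‖x‖ := lt_trans hR0' hx
    have hit : h^[j+1] x = h y := by rw [Function.iterate_succ_apply']
    refine ⟨by rw [hit]; exact step y hy, ?_, ?_⟩
    · rw [hit]
      have h1 : C1 * ‖y‖ ^ a ≤ ‖h y‖ := hlow y hy
      have h2 : (C1 ^ (∑ i ∈ Finset.range j, a ^ i) * ‖x‖ ^ (a ^ j)) ^ a ≤ ‖y‖ ^ a :=
        Real.rpow_le_rpow (by positivity) hlo (by linarith)
      have h3 : (C1 ^ (∑ i ∈ Finset.range j, a ^ i) * ‖x‖ ^ (a ^ j)) ^ a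
          = C1 ^ ((∑ i ∈ Finset.range j, a ^ i) * a) * ‖x‖ ^ (a ^ j * a) := by
        rw [Real.mul_rpow (by positivity) (by positivity),
          ← Real.rpow_mul (le_of_lt hC1), ← Real.rpow_mul (le_of_lt hx0)]
      have hsum : (∑ i ∈ Finset.range (j+1), a ^ i)
          = (∑ i ∈ Finset.range j, a ^ i) * a + 1 := by
        rw [geom_sum_succ]; ring
      rw [hsum, pow_succ, Real.rpow_add hC1, Real.rpow_one]
      calc C1 ^ ((∑ i ∈ Finset.range j, a ^ i) * a) * C1 * ‖x‖ ^ (a ^ j * a)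
          = C1 * (C1 ^ ((∑ i ∈ Finset.range j, a ^ i) * a) * ‖x‖ ^ (a ^ j * a)) := by ring
        _ ≤ C1 * ‖y‖ ^ a := by
            rw [← h3]
            exact mul_le_mul_of_nonneg_left h2 (le_of_lt hC1)
        _ ≤ ‖h y‖ := h1
    · rw [hit]
      have h1 : ‖h y‖ ≤ C2 * ‖y‖ ^ b := hup y hy
      have h2 : ‖y‖ ^ b ≤ (C2 ^ (∑ i ∈ Finset.range j, b ^ i) * ‖x‖ ^ (b ^ j)) ^ b :=
        Real.rpow_le_rpow (norm_nonneg _) hhi (by linarith)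
      have h3 : (C2 ^ (∑ i ∈ Finset.range j, b ^ i) * ‖x‖ ^ (b ^ j)) ^ b
          = C2 ^ ((∑ i ∈ Finset.range j, b ^ i) * b) * ‖x‖ ^ (b ^ j * b) := by
        rw [Real.mul_rpow (by positivity) (by positivity),
          ← Real.rpow_mul (le_of_lt hC2), ← Real.rpow_mul (le_of_lt hx0)]
      have hsum : (∑ i ∈ Finset.range (j+1), b ^ i)
          = (∑ i ∈ Finset.range j, b ^ i) * b + 1 := by
        rw [geom_sum_succ]; ring
      rw [hsum, pow_succ, Real.rpow_add hC2, Real.rpow_one]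
      calc ‖h y‖ ≤ C2 * ‖y‖ ^ b := h1
        _ ≤ C2 * (C2 ^ ((∑ i ∈ Finset.range j, b ^ i) * b) * ‖x‖ ^ (b ^ j * b)) := by
            rw [← h3]
            exact mul_le_mul_of_nonneg_left h2 (le_of_lt hC2)
        _ = C2 ^ ((∑ i ∈ Finset.range j, b ^ i) * b) * C2 * ‖x‖ ^ (b ^ j * b) := by ring
end

section
/- Assume (G) and (L). Then for every r > 0 with M(r,L) > R0 one has C1·M(r,L)^a ≤ M(2r,L) ≤ C2·M(r,L)^b. -/
/-- The maximum modulus `M(r,g) = max_{‖x‖ = r} ‖g(x)‖` (as a supremum). -/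
noncomputable def maxMod {m : ℕ} (g : EuclideanSpace ℝ (Fin m) → EuclideanSpace ℝ (Fin m))
    (r : ℝ) : ℝ :=
  sSup ((fun x => ‖g x‖) '' {x : EuclideanSpace ℝ (Fin m) | ‖x‖ = r})

lemma sphere_facts {m : ℕ} (hm : 2 ≤ m) (L : EuclideanSpace ℝ (Fin m) → EuclideanSpace ℝ (Fin m))
    (hLcont : Continuous L) (r : ℝ) (hr : 0 ≤ r) :
    (∃ x : EuclideanSpace ℝ (Fin m), ‖x‖ = r ∧ ‖L x‖ = maxMod L r) ∧
    (∀ x : EuclideanSpace ℝ (Fin m), ‖x‖ = r → ‖L x‖ ≤ maxMod L r) := by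
  haveI : Nonempty (Fin m) := ⟨⟨0, by omega⟩⟩
  have hsph : {x : EuclideanSpace ℝ (Fin m) | ‖x‖ = r} = Metric.sphere 0 r := by
    ext x; simp [Metric.mem_sphere, dist_zero_right]
  have hcomp : IsCompact {x : EuclideanSpace ℝ (Fin m) | ‖x‖ = r} := by
    rw [hsph]; exact isCompact_sphere 0 r
  have hne : {x : EuclideanSpace ℝ (Fin m) | ‖x‖ = r}.Nonempty := by
    obtain ⟨x, hx⟩ := exists_norm_eq (EuclideanSpace ℝ (Fin m)) hr
    exact ⟨x, hx⟩
  have himg : IsCompact ((fun x => ‖L x‖) '' {x : EuclideanSpace ℝ (Fin m) | ‖x‖ = r}) :=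
    hcomp.image (continuous_norm.comp hLcont)
  have hineimg := hne.image (fun x => ‖L x‖)
  constructor
  · obtain ⟨x, hx, hxe⟩ := himg.sSup_mem hineimg
    exact ⟨x, hx, hxe⟩
  · intro x hx
    exact le_csSup himg.bddAbove ⟨x, hx, rfl⟩

/-- One-step growth of the maximum modulus of a Poincaré linearizer:
if `M(r,L) > R0` then `C1·M(r,L)^a ≤ M(2r,L) ≤ C2·M(r,L)^b`. -/
theorem maxMod_step {m : ℕ} (hm : 2 ≤ m) (d K : ℝ) (hK : 1 ≤ K) (hdK : K < d)
    (a b : ℝ) (ha : a = (d / K) ^ ((1 : ℝ) / ((m : ℝ) - 1)))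
    (hb : b = (d * K) ^ ((1 : ℝ) / ((m : ℝ) - 1)))
    (R0 C1 C2 : ℝ) (hR0 : 1 ≤ R0) (hC1 : 0 < C1) (hC2 : 1 ≤ C2)
    (hbig : 1 < C1 * R0 ^ (a - 1))
    (f L : EuclideanSpace ℝ (Fin m) → EuclideanSpace ℝ (Fin m))
    (hlow : ∀ y : EuclideanSpace ℝ (Fin m), R0 < ‖y‖ → C1 * ‖y‖ ^ a ≤ ‖f y‖)
    (hup : ∀ y : EuclideanSpace ℝ (Fin m), ‖f y‖ ≤ C2 * (max ‖y‖ R0) ^ b)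
    (hLcont : Continuous L)
    (hfunc : ∀ x : EuclideanSpace ℝ (Fin m), f (L x) = L ((2 : ℝ) • x)) :
    ∀ r : ℝ, 0 < r → R0 < maxMod L r →
      C1 * (maxMod L r) ^ a ≤ maxMod L (2 * r) ∧
      maxMod L (2 * r) ≤ C2 * (maxMod L r) ^ b := by
  intro r hr hM
  have hb0 : 0 < b := by
    rw [hb]
    exact Real.rpow_pos_of_pos (by nlinarith) _
  obtain ⟨⟨x0, hx0, hx0M⟩, hub⟩ := sphere_facts hm L hLcont r hr.le
  obtain ⟨⟨x1, hx1, hx1M⟩, hub2⟩ := sphere_facts hm L hLcont (2 * r) (by linarith)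
  set M := maxMod L r with hMdef
  refine ⟨?_, ?_⟩
  · -- lower bound
    have h1 : C1 * M ^ a ≤ ‖f (L x0)‖ := by
      rw [← hx0M]; exact hlow (L x0) (by rw [hx0M]; exact hM)
    have h2 : ‖f (L x0)‖ = ‖L ((2 : ℝ) • x0)‖ := by rw [hfunc]
    have h3 : ‖L ((2 : ℝ) • x0)‖ ≤ maxMod L (2 * r) := by
      apply hub2
      rw [norm_smul, hx0]; simp
    linarith
  · -- upper bound
    have hx1' : ((2 : ℝ) • ((1/2 : ℝ) • x1)) = x1 := by
      rw [smul_smul]; norm_num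
    have h1 : ‖L x1‖ = ‖f (L ((1/2 : ℝ) • x1))‖ := by
      rw [hfunc, hx1']
    have hhalf : ‖(1/2 : ℝ) • x1‖ = r := by
      rw [norm_smul, hx1]; simp
    have h2 : ‖L ((1/2 : ℝ) • x1)‖ ≤ M := hub (_) hhalf
    have h3 : max ‖L ((1/2 : ℝ) • x1)‖ R0 ≤ M := max_le h2 hM.le
    have h4 : ‖f (L ((1/2 : ℝ) • x1))‖ ≤ C2 * (max ‖L ((1/2 : ℝ) • x1)‖ R0) ^ b :=
      hup _
    have h5 : (max ‖L ((1/2 : ℝ) • x1)‖ R0) ^ b ≤ M ^ b :=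
      Real.rpow_le_rpow (le_max_of_le_right (by linarith)) h3 hb0.le
    calc maxMod L (2 * r) = ‖L x1‖ := hx1M.symm
      _ ≤ C2 * (max ‖L ((1/2 : ℝ) • x1)‖ R0) ^ b := by rw [h1]; exact h4
      _ ≤ C2 * M ^ b := by nlinarith
end

section
/- Assume (G), (L) and (M), and let r0 > 0 satisfy M(r0,L) > R0. Then for every integer j ≥ 1 and every r ∈ [r0, 2r0], C1^{q_j(a)}·M(r0,L)^{a^j} ≤ M(2^j r, L) ≤ C2^{q_j(b)}·M(2r0,L)^{b^j}. -/
lemma maxMod_spec {m : ℕ} (hm : 2 ≤ m)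
    {L : EuclideanSpace ℝ (Fin m) → EuclideanSpace ℝ (Fin m)} (hL : Continuous L)
    {t : ℝ} (ht : 0 ≤ t) :
    (∃ x : EuclideanSpace ℝ (Fin m), ‖x‖ = t ∧ ‖L x‖ = maxMod L t) ∧
      ∀ x : EuclideanSpace ℝ (Fin m), ‖x‖ = t → ‖L x‖ ≤ maxMod L t := by
  haveI : Nonempty (Fin m) := ⟨⟨0, by omega⟩⟩
  have hsph : {x : EuclideanSpace ℝ (Fin m) | ‖x‖ = t} = Metric.sphere 0 t := by
    ext x; simp [dist_zero_right]
  have hcomp : IsCompact {x : EuclideanSpace ℝ (Fin m) | ‖x‖ = t} := by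
    rw [hsph]; exact isCompact_sphere 0 t
  obtain ⟨x, hx⟩ := exists_norm_eq (EuclideanSpace ℝ (Fin m)) ht
  have hne : {x : EuclideanSpace ℝ (Fin m) | ‖x‖ = t}.Nonempty := ⟨x, hx⟩
  have himg : IsCompact ((fun x => ‖L x‖) '' {x : EuclideanSpace ℝ (Fin m) | ‖x‖ = t}) :=
    hcomp.image hL.norm
  have hineK : ((fun x => ‖L x‖) '' {x : EuclideanSpace ℝ (Fin m) | ‖x‖ = t}).Nonempty :=
    hne.image _
  have hmem := himg.sSup_mem hineK
  have hbdd := himg.bddAbove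
  constructor
  · obtain ⟨y, hy, hyE⟩ := hmem
    exact ⟨y, hy, hyE⟩
  · intro z hz
    exact le_csSup hbdd ⟨z, hz, rfl⟩

/-- Uniform two-sided bounds for `M(2^j r, L)` for `r ∈ [r0, 2r0]` with `M(r0,L) > R0`,
where `q_j(y) = 1 + y + ⋯ + y^{j-1}`. -/
theorem maxMod_uniform_bounds {m : ℕ} (hm : 2 ≤ m) (d K : ℝ) (hK : 1 ≤ K) (hdK : K < d)
    (a b : ℝ) (ha : a = (d / K) ^ ((1 : ℝ) / ((m : ℝ) - 1)))
    (hb : b = (d * K) ^ ((1 : ℝ) / ((m : ℝ) - 1)))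
    (R0 C1 C2 : ℝ) (hR0 : 1 ≤ R0) (hC1 : 0 < C1) (hC2 : 1 ≤ C2)
    (hbig : 1 < C1 * R0 ^ (a - 1))
    (f L : EuclideanSpace ℝ (Fin m) → EuclideanSpace ℝ (Fin m))
    (hlow : ∀ y : EuclideanSpace ℝ (Fin m), R0 < ‖y‖ → C1 * ‖y‖ ^ a ≤ ‖f y‖)
    (hup : ∀ y : EuclideanSpace ℝ (Fin m), ‖f y‖ ≤ C2 * (max ‖y‖ R0) ^ b)
    (hLcont : Continuous L)
    (hfunc : ∀ x : EuclideanSpace ℝ (Fin m), f (L x) = L ((2 : ℝ) • x))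
    (hmono : ∀ r s : ℝ, 0 < r → r ≤ s → maxMod L r ≤ maxMod L s)
    (r0 : ℝ) (hr0 : 0 < r0) (hMr0 : R0 < maxMod L r0) :
    ∀ j : ℕ, 1 ≤ j → ∀ r : ℝ, r ∈ Set.Icc r0 (2 * r0) →
      C1 ^ (∑ i ∈ Finset.range j, a ^ i) * (maxMod L r0) ^ (a ^ j) ≤
        maxMod L ((2 : ℝ) ^ j * r) ∧
      maxMod L ((2 : ℝ) ^ j * r) ≤
        C2 ^ (∑ i ∈ Finset.range j, b ^ i) * (maxMod L (2 * r0)) ^ (b ^ j) := by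
  have hm1 : (0:ℝ) < (m:ℝ) - 1 := by
    have h2 : (2:ℝ) ≤ (m:ℝ) := by exact_mod_cast hm
    linarith
  have hK0 : (0:ℝ) < K := lt_of_lt_of_le one_pos hK
  have hd1 : (1:ℝ) < d := lt_of_le_of_lt hK hdK
  have ha1 : 1 < a := by
    rw [ha]
    refine (Real.one_lt_rpow_iff_of_pos (by positivity)).mpr (Or.inl ⟨?_, by positivity⟩)
    exact (one_lt_div hK0).mpr hdK
  have hb1 : 1 < b := by
    rw [hb]
    refine (Real.one_lt_rpow_iff_of_pos (by positivity)).mpr (Or.inl ⟨?_, by positivity⟩)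
    nlinarith
  have ha0 : 0 < a := by linarith
  have hb0 : 0 < b := by linarith
  have hR00 : (0:ℝ) < R0 := by linarith
  have hC20 : (0:ℝ) < C2 := by linarith
  -- One-step lower bound
  have step_lo : ∀ t : ℝ, 0 < t → R0 < maxMod L t →
      C1 * (maxMod L t) ^ a ≤ maxMod L (2 * t) := by
    intro t ht hMt
    obtain ⟨⟨x0, hx0, hx0M⟩, _⟩ := maxMod_spec hm hLcont ht.le
    have h2t : (0:ℝ) ≤ 2 * t := by linarith
    obtain ⟨_, hub⟩ := maxMod_spec hm hLcont h2t
    have hLx0 : R0 < ‖L x0‖ := by rw [hx0M]; exact hMt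
    have h1 := hlow (L x0) hLx0
    rw [hfunc x0] at h1
    have hnorm2 : ‖(2:ℝ) • x0‖ = 2 * t := by
      rw [norm_smul, hx0]; simp
    calc C1 * (maxMod L t) ^ a = C1 * ‖L x0‖ ^ a := by rw [hx0M]
      _ ≤ ‖L ((2:ℝ) • x0)‖ := h1
      _ ≤ maxMod L (2 * t) := hub _ hnorm2
  -- One-step upper bound
  have step_up : ∀ t : ℝ, 0 < t → R0 < maxMod L t →
      maxMod L (2 * t) ≤ C2 * (maxMod L t) ^ b := by
    intro t ht hMt
    obtain ⟨_, hub⟩ := maxMod_spec hm hLcont ht.le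
    have h2t : (0:ℝ) ≤ 2 * t := by linarith
    obtain ⟨⟨y, hy, hyM⟩, _⟩ := maxMod_spec hm hLcont h2t
    set x : EuclideanSpace ℝ (Fin m) := (2:ℝ)⁻¹ • y with hxdef
    have hxn : ‖x‖ = t := by
      rw [hxdef, norm_smul, hy]
      norm_num
      ring
    have hyx : y = (2:ℝ) • x := by
      rw [hxdef, smul_smul]; norm_num
    have h1 : ‖L y‖ ≤ C2 * (max ‖L x‖ R0) ^ b := by
      rw [hyx, ← hfunc x]; exact hup (L x)
    have hmaxle : max ‖L x‖ R0 ≤ maxMod L t := by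
      apply max_le (hub x hxn) hMt.le
    have h2 : (max ‖L x‖ R0) ^ b ≤ (maxMod L t) ^ b := by
      apply Real.rpow_le_rpow (le_max_of_le_right hR00.le) hmaxle hb0.le
    calc maxMod L (2 * t) = ‖L y‖ := hyM.symm
      _ ≤ C2 * (max ‖L x‖ R0) ^ b := h1
      _ ≤ C2 * (maxMod L t) ^ b := mul_le_mul_of_nonneg_left h2 hC20.le
  -- The lower-step output stays above R0
  have key : ∀ M : ℝ, R0 < M → R0 < C1 * M ^ a := by
    intro M hM
    have hM0 : (0:ℝ) < M := lt_trans hR00 hM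
    have e : M ^ a = M ^ (a - 1) * M := by
      rw [← Real.rpow_add_one hM0.ne' (a-1)]; ring_nf
    have h1 : R0 ^ (a - 1) ≤ M ^ (a - 1) :=
      Real.rpow_le_rpow hR00.le hM.le (by linarith)
    have h2 : (0:ℝ) < R0 ^ (a-1) := Real.rpow_pos_of_pos hR00 _
    calc R0 < M := hM
      _ = 1 * M := (one_mul M).symm
      _ ≤ (C1 * R0 ^ (a-1)) * M := by gcongr
      _ ≤ (C1 * M ^ (a-1)) * M := by gcongr
      _ = C1 * M ^ a := by rw [e]; ring
  -- Main induction
  have main : ∀ s : ℝ, 0 < s → R0 < maxMod L s → ∀ j : ℕ,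
      R0 < maxMod L ((2:ℝ) ^ j * s) ∧
      C1 ^ (∑ i ∈ Finset.range j, a ^ i) * (maxMod L s) ^ (a ^ j) ≤
        maxMod L ((2:ℝ) ^ j * s) ∧
      maxMod L ((2:ℝ) ^ j * s) ≤
        C2 ^ (∑ i ∈ Finset.range j, b ^ i) * (maxMod L s) ^ (b ^ j) := by
    intro s hs hMs
    have hMs0 : (0:ℝ) < maxMod L s := lt_trans hR00 hMs
    intro j
    induction j with
    | zero => simp [Real.rpow_one, hMs]
    | succ j ih =>
      obtain ⟨ihR, ihlo, ihup⟩ := ih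
      have hts : (0:ℝ) < (2:ℝ) ^ j * s := by positivity
      have heq : (2:ℝ) ^ (j+1) * s = 2 * ((2:ℝ) ^ j * s) := by ring
      set Mj := maxMod L ((2:ℝ) ^ j * s) with hMj
      have hMj0 : (0:ℝ) < Mj := lt_trans hR00 ihR
      have hlo1 : C1 * Mj ^ a ≤ maxMod L ((2:ℝ) ^ (j+1) * s) := by
        rw [heq]; exact step_lo _ hts ihR
      have hup1 : maxMod L ((2:ℝ) ^ (j+1) * s) ≤ C2 * Mj ^ b := by
        rw [heq]; exact step_up _ hts ihR
      refine ⟨lt_of_lt_of_le (key Mj ihR) hlo1, ?_, ?_⟩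
      · -- lower bound
        set q := ∑ i ∈ Finset.range j, a ^ i with hq
        have hq0 : 0 ≤ q := by
          rw [hq]; apply Finset.sum_nonneg; intro i _; positivity
        have e1 : (∑ i ∈ Finset.range (j+1), a ^ i) = a * q + 1 := geom_sum_succ
        have eA : C1 ^ (q * a) = (C1 ^ q) ^ a := Real.rpow_mul hC1.le q a
        have eB : (maxMod L s) ^ ((a : ℝ) ^ j * a) = ((maxMod L s) ^ ((a : ℝ) ^ j)) ^ a :=
          Real.rpow_mul hMs0.le _ _
        have eC : C1 ^ (q * a + 1) = C1 ^ (q * a) * C1 := by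
          rw [Real.rpow_add hC1, Real.rpow_one]
        have eD : (C1 ^ q * (maxMod L s) ^ ((a : ℝ) ^ j)) ^ a
            = (C1 ^ q) ^ a * ((maxMod L s) ^ ((a : ℝ) ^ j)) ^ a :=
          Real.mul_rpow (by positivity) (by positivity)
        calc C1 ^ (∑ i ∈ Finset.range (j+1), a ^ i) * (maxMod L s) ^ (a ^ (j+1))
            = C1 * (C1 ^ q * (maxMod L s) ^ ((a : ℝ) ^ j)) ^ a := by
              rw [e1, mul_comm a q, eC, eA, pow_succ, eB, eD]; ring
          _ ≤ C1 * Mj ^ a := by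
              gcongr
          _ ≤ maxMod L ((2:ℝ) ^ (j+1) * s) := hlo1
      · -- upper bound
        set q := ∑ i ∈ Finset.range j, b ^ i with hq
        have hq0 : 0 ≤ q := by
          rw [hq]; apply Finset.sum_nonneg; intro i _; positivity
        have e1 : (∑ i ∈ Finset.range (j+1), b ^ i) = b * q + 1 := geom_sum_succ
        have eA : C2 ^ (q * b) = (C2 ^ q) ^ b := Real.rpow_mul hC20.le q b
        have eB : (maxMod L s) ^ ((b : ℝ) ^ j * b) = ((maxMod L s) ^ ((b : ℝ) ^ j)) ^ b :=
          Real.rpow_mul hMs0.le _ _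
        have eC : C2 ^ (q * b + 1) = C2 ^ (q * b) * C2 := by
          rw [Real.rpow_add hC20, Real.rpow_one]
        have eD : (C2 ^ q * (maxMod L s) ^ ((b : ℝ) ^ j)) ^ b
            = (C2 ^ q) ^ b * ((maxMod L s) ^ ((b : ℝ) ^ j)) ^ b :=
          Real.mul_rpow (by positivity) (by positivity)
        calc maxMod L ((2:ℝ) ^ (j+1) * s) ≤ C2 * Mj ^ b := hup1
          _ ≤ C2 * (C2 ^ q * (maxMod L s) ^ ((b : ℝ) ^ j)) ^ b := by
              gcongr
          _ = C2 ^ (∑ i ∈ Finset.range (j+1), b ^ i) * (maxMod L s) ^ (b ^ (j+1)) := by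
              rw [e1, mul_comm b q, eC, eA, pow_succ, eB, eD]; ring
  intro j hj r hr
  obtain ⟨hr1, hr2⟩ := hr
  have hrpos : 0 < r := lt_of_lt_of_le hr0 hr1
  have hM2r0 : R0 < maxMod L (2 * r0) :=
    lt_of_lt_of_le hMr0 (hmono r0 (2 * r0) hr0 (by linarith))
  have h1 := (main r0 hr0 hMr0 j).2.1
  have h2 := (main (2 * r0) (by linarith) hM2r0 j).2.2
  constructor
  · exact le_trans h1 (hmono _ _ (by positivity) (by nlinarith [pow_pos (two_pos (α := ℝ)) j]))
  · exact le_trans (hmono _ _ (by positivity) (by nlinarith [pow_pos (two_pos (α := ℝ)) j])) h2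
end

section
/- Assume (G), (L) and (M), and suppose there exists r1 > 0 with M(r1,L) > R0. Then the order of L, ρ_L = limsup_{r→∞} (m−1)·(log log M(r,L))/(log r), satisfies (log d − log K)/(log 2) ≤ ρ_L ≤ (log d + log K)/(log 2). -/
open Filter Topology Real Set

section GrowthOrder

variable {F : ℝ → ℝ} {k : ℝ}

lemma tendsto_log_mul_rpow_div_log {B : ℝ} (hB : 0 < B) (γ : ℝ) :
    Tendsto (fun r => log (B * r ^ γ) / log r) atTop (𝓝 γ) := by
  have h : Tendsto (fun r => log B / log r + γ) atTop (𝓝 (0 + γ)) :=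
    (tendsto_const_nhds.div_atTop tendsto_log_atTop).add tendsto_const_nhds
  rw [zero_add] at h
  refine h.congr' ?_
  filter_upwards [eventually_gt_atTop 1] with r hr
  have hlog : log r ≠ 0 := (log_pos hr).ne'
  rw [log_mul hB.ne' (rpow_pos_of_pos (by linarith) γ).ne', log_rpow (by linarith)]
  field_simp

lemma eventually_mul_log_div_log_le (hk : 0 ≤ k) {B γ : ℝ} (hF : ∀ᶠ r in atTop, 0 < F r)
    (hFB : ∀ᶠ r in atTop, F r ≤ B * r ^ γ) :
    ∀ᶠ r in atTop, k * log (F r) / log r ≤ k * (log (B * r ^ γ) / log r) := by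
  filter_upwards [hF, hFB, eventually_gt_atTop 1] with r hpos hle hr
  have := log_pos hr
  rw [mul_div_assoc]
  gcongr

lemma isBoundedUnder_le_mul_log_div_log (hk : 0 ≤ k) {B γ : ℝ} (hB : 0 < B)
    (hF : ∀ᶠ r in atTop, 0 < F r) (hFB : ∀ᶠ r in atTop, F r ≤ B * r ^ γ) :
    IsBoundedUnder (· ≤ ·) atTop (fun r => k * log (F r) / log r) :=
  (((tendsto_log_mul_rpow_div_log hB γ).const_mul k).isBoundedUnder_le).mono_le
    (eventually_mul_log_div_log_le hk hF hFB)

lemma isBoundedUnder_ge_mul_log_div_log (hk : 0 ≤ k) {c : ℝ} (hc : 0 < c)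
    (hcF : ∀ᶠ r in atTop, c ≤ F r) :
    IsBoundedUnder (· ≥ ·) atTop (fun r => k * log (F r) / log r) := by
  have h : Tendsto (fun r => k * log c / log r) atTop (𝓝 0) :=
    tendsto_const_nhds.div_atTop tendsto_log_atTop
  refine ⟨-1, eventually_map.2 ?_⟩
  filter_upwards [hcF, eventually_gt_atTop 1, h.eventually (eventually_ge_nhds neg_one_lt_zero)]
    with r hle hr hneg
  have := log_pos hr
  refine hneg.trans ?_
  gcongr

lemma limsup_mul_log_div_log_le (hk : 0 ≤ k) {c B γ : ℝ} (hc : 0 < c) (hB : 0 < B)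
    (hcF : ∀ᶠ r in atTop, c ≤ F r) (hFB : ∀ᶠ r in atTop, F r ≤ B * r ^ γ) :
    limsup (fun r => k * log (F r) / log r) atTop ≤ k * γ := by
  have hlim := (tendsto_log_mul_rpow_div_log hB γ).const_mul k
  have hF : ∀ᶠ r in atTop, 0 < F r := hcF.mono fun r h => hc.trans_le h
  calc _ ≤ limsup (fun r => k * (log (B * r ^ γ) / log r)) atTop :=
        limsup_le_limsup (eventually_mul_log_div_log_le hk hF hFB)
          (isBoundedUnder_ge_mul_log_div_log hk hc hcF).isCoboundedUnder_le
          hlim.isBoundedUnder_le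
    _ = k * γ := hlim.limsup_eq

lemma le_limsup_mul_log_div_log (hk : 0 ≤ k) {A α : ℝ} (hA : 0 < A) {s : ℕ → ℝ}
    (hs : Tendsto s atTop atTop) (hsF : ∀ᶠ n in atTop, A * s n ^ α ≤ F (s n))
    (hbdd : IsBoundedUnder (· ≤ ·) atTop (fun r => k * log (F r) / log r)) :
    k * α ≤ limsup (fun r => k * log (F r) / log r) atTop := by
  have hlim := ((tendsto_log_mul_rpow_div_log hA α).const_mul k).comp hs
  refine le_of_forall_sub_le fun ε hε => le_limsup_of_frequently_le (hs.frequently ?_) hbdd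
  refine Eventually.frequently ?_
  filter_upwards [hlim.eventually (eventually_ge_nhds (sub_lt_self _ hε)), hsF,
    hs.eventually (eventually_gt_atTop 1)] with n hα hle hs1
  have := log_pos hs1
  have : 0 < A * s n ^ α := mul_pos hA (rpow_pos_of_pos (by linarith) α)
  refine hα.trans ?_
  simp only [Function.comp, mul_div_assoc]
  gcongr

end GrowthOrder

section DoublingRecursion

variable {F : ℝ → ℝ} {r₁ : ℝ}

lemma pow_eq_two_pow_rpow_logb {a : ℝ} (ha : 0 < a) (n : ℕ) :
    a ^ n = ((2 : ℝ) ^ n) ^ logb 2 a := by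
  rw [← rpow_natCast_mul zero_le_two, mul_comm, rpow_mul_natCast zero_le_two,
    rpow_logb zero_lt_two (by norm_num) ha]

lemma le_two_pow_mul (hr₁ : 0 < r₁) (n : ℕ) : r₁ ≤ 2 ^ n * r₁ :=
  le_mul_of_one_le_left hr₁.le (one_le_pow₀ one_le_two)

lemma add_div_sub_one_le_pow_mul {u : ℕ → ℝ} {B b : ℝ} (hb : 1 < b)
    (h : ∀ n, u (n + 1) ≤ B + b * u n) (n : ℕ) :
    u n + B / (b - 1) ≤ b ^ n * (u 0 + B / (b - 1)) := by
  refine le_geom (u := fun n => u n + B / (b - 1)) (by linarith) n fun j _ => ?_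
  have : B + B / (b - 1) = b * (B / (b - 1)) := by field_simp [(by linarith : b - 1 ≠ 0)]; ring
  linarith [h j]

lemma pow_mul_le_add_div_sub_one {u : ℕ → ℝ} {A a : ℝ} (ha : 1 < a)
    (h : ∀ n, A + a * u n ≤ u (n + 1)) (n : ℕ) :
    a ^ n * (u 0 + A / (a - 1)) ≤ u n + A / (a - 1) := by
  refine geom_le (u := fun n => u n + A / (a - 1)) (by linarith) n fun j _ => ?_
  have : A + A / (a - 1) = a * (A / (a - 1)) := by field_simp [(by linarith : a - 1 ≠ 0)]; ring
  linarith [h j]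

lemma exists_rpow_bound_of_doubling_le {B b : ℝ} (hB : 0 ≤ B) (hb : 1 < b) (hr₁ : 0 < r₁)
    (hmono : MonotoneOn F (Ici r₁)) (hF₁ : 0 < F r₁)
    (hrec : ∀ r, r₁ ≤ r → F (2 * r) ≤ B + b * F r) :
    ∃ C > 0, ∀ r, r₁ ≤ r → F r ≤ C * r ^ logb 2 b := by
  have hb1 : 0 < b - 1 := by linarith
  set w := F r₁ + B / (b - 1)
  have hseq (n : ℕ) : F (2 ^ n * r₁) + B / (b - 1) ≤ b ^ n * w := by
    simpa only [pow_zero, one_mul] using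
      add_div_sub_one_le_pow_mul (u := fun n => F (2 ^ n * r₁)) hb (fun n => by
        rw [pow_succ', mul_assoc]; exact hrec _ (le_two_pow_mul hr₁ n)) n
  have hγ : 0 ≤ logb 2 b := logb_nonneg one_lt_two hb.le
  refine ⟨w * (2 / r₁) ^ logb 2 b, by positivity, fun r hr => ?_⟩
  obtain ⟨n, hn, hn'⟩ := exists_nat_pow_near ((one_le_div hr₁).2 hr) one_lt_two
  have hr' : r ≤ 2 ^ (n + 1) * r₁ := (div_le_iff₀ hr₁).1 hn'.le
  calc F r ≤ F (2 ^ (n + 1) * r₁) := hmono hr (le_two_pow_mul hr₁ _) hr'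
    _ ≤ b ^ (n + 1) * w := by linarith [hseq (n + 1), div_nonneg hB hb1.le]
    _ = w * ((2 : ℝ) ^ (n + 1)) ^ logb 2 b := by
        rw [pow_eq_two_pow_rpow_logb (by linarith), mul_comm]
    _ ≤ w * (2 / r₁ * r) ^ logb 2 b := by
        rw [pow_succ', mul_comm_div]
        gcongr
    _ = w * (2 / r₁) ^ logb 2 b * r ^ logb 2 b := by
        rw [mul_rpow (by positivity) (by linarith), mul_assoc]

lemma exists_rpow_bound_of_le_doubling {A a : ℝ} (ha : 1 < a) (hr₁ : 0 < r₁)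
    (hrec : ∀ r, r₁ ≤ r → A + a * F r ≤ F (2 * r)) (hF₁ : 0 < A + (a - 1) * F r₁) :
    ∃ c > 0, ∀ᶠ n : ℕ in atTop, c * (2 ^ n * r₁) ^ logb 2 a ≤ F (2 ^ n * r₁) := by
  have ha1 : 0 < a - 1 := by linarith
  set v := F r₁ + A / (a - 1)
  have hv : 0 < v := by
    have : (a - 1) * v = A + (a - 1) * F r₁ := by simp only [v]; field_simp; ring
    nlinarith
  have hseq (n : ℕ) : a ^ n * v ≤ F (2 ^ n * r₁) + A / (a - 1) := by
    simpa only [pow_zero, one_mul] using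
      pow_mul_le_add_div_sub_one (u := fun n => F (2 ^ n * r₁)) ha (fun n => by
        rw [pow_succ', mul_assoc]; exact hrec _ (le_two_pow_mul hr₁ n)) n
  have htend : Tendsto (fun n : ℕ => a ^ n * (v / 2)) atTop atTop :=
    (tendsto_pow_atTop_atTop_of_one_lt ha).atTop_mul_const (by positivity)
  refine ⟨v / 2 / r₁ ^ logb 2 a, by positivity, ?_⟩
  filter_upwards [htend.eventually_ge_atTop (A / (a - 1))] with n hn
  calc v / 2 / r₁ ^ logb 2 a * (2 ^ n * r₁) ^ logb 2 a = a ^ n * (v / 2) := by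
        rw [mul_rpow (by positivity) hr₁.le, ← pow_eq_two_pow_rpow_logb (by linarith)]
        field_simp
    _ ≤ F (2 ^ n * r₁) := by linarith [hseq n]

end DoublingRecursion

section MaxModulus

variable {m : ℕ} [NeZero m] {g f L : EuclideanSpace ℝ (Fin m) → EuclideanSpace ℝ (Fin m)}
  {r : ℝ}

lemma isGreatest_maxMod (hg : Continuous g) (hr : 0 ≤ r) :
    IsGreatest ((fun x => ‖g x‖) '' {x | ‖x‖ = r}) (maxMod g r) := by
  have hcpt : IsCompact {x : EuclideanSpace ℝ (Fin m) | ‖x‖ = r} := by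
    simpa only [Metric.sphere, dist_zero_right] using
      isCompact_sphere (0 : EuclideanSpace ℝ (Fin m)) r
  obtain ⟨x, hx⟩ := exists_norm_eq (EuclideanSpace ℝ (Fin m)) hr
  exact (hcpt.image hg.norm).isGreatest_sSup ⟨_, x, hx, rfl⟩

lemma norm_le_maxMod (hg : Continuous g) (x : EuclideanSpace ℝ (Fin m)) :
    ‖g x‖ ≤ maxMod g ‖x‖ :=
  (isGreatest_maxMod hg (norm_nonneg x)).2 ⟨x, rfl, rfl⟩

lemma exists_norm_eq_maxMod (hg : Continuous g) (hr : 0 ≤ r) :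
    ∃ x : EuclideanSpace ℝ (Fin m), ‖x‖ = r ∧ ‖g x‖ = maxMod g r :=
  (isGreatest_maxMod hg hr).1

lemma maxMod_two_mul_le {C b R : ℝ} (hC : 0 ≤ C) (hb : 0 ≤ b) (hL : Continuous L)
    (hfunc : ∀ x, f (L x) = L ((2 : ℝ) • x)) (hup : ∀ y, ‖f y‖ ≤ C * max ‖y‖ R ^ b)
    (hr : 0 ≤ r) :
    maxMod L (2 * r) ≤ C * max (maxMod L r) R ^ b := by
  obtain ⟨x, hx, hLx⟩ := exists_norm_eq_maxMod hL (by linarith : 0 ≤ 2 * r)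
  have hx2 : (2 : ℝ) • ((2 : ℝ)⁻¹ • x) = x := smul_inv_smul₀ two_ne_zero x
  have hnorm : ‖(2 : ℝ)⁻¹ • x‖ = r := by rw [norm_smul, hx, norm_inv, Real.norm_two]; ring
  calc maxMod L (2 * r) = ‖f (L ((2 : ℝ)⁻¹ • x))‖ := by rw [hfunc, hx2, hLx]
    _ ≤ C * max ‖L ((2 : ℝ)⁻¹ • x)‖ R ^ b := hup _
    _ ≤ C * max (maxMod L r) R ^ b := by
        have := norm_le_maxMod hL ((2 : ℝ)⁻¹ • x)
        rw [hnorm] at this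
        gcongr

lemma le_maxMod_two_mul {C a R : ℝ} (hL : Continuous L)
    (hfunc : ∀ x, f (L x) = L ((2 : ℝ) • x)) (hlow : ∀ y, R < ‖y‖ → C * ‖y‖ ^ a ≤ ‖f y‖)
    (hr : 0 ≤ r) (hR : R < maxMod L r) :
    C * maxMod L r ^ a ≤ maxMod L (2 * r) := by
  obtain ⟨x, hx, hLx⟩ := exists_norm_eq_maxMod hL hr
  have hnorm : ‖(2 : ℝ) • x‖ = 2 * r := by rw [norm_smul, hx, Real.norm_two]
  calc C * maxMod L r ^ a = C * ‖L x‖ ^ a := by rw [hLx]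
    _ ≤ ‖f (L x)‖ := hlow _ (hLx ▸ hR)
    _ = ‖L ((2 : ℝ) • x)‖ := by rw [hfunc]
    _ ≤ maxMod L (2 * r) := hnorm ▸ norm_le_maxMod hL _

lemma log_maxMod_two_mul_le {C b R : ℝ} (hC : 0 < C) (hb : 0 ≤ b) (hR : 1 ≤ R)
    (hL : Continuous L) (hfunc : ∀ x, f (L x) = L ((2 : ℝ) • x))
    (hup : ∀ y, ‖f y‖ ≤ C * max ‖y‖ R ^ b) (hr : 0 ≤ r)
    (hRr : R ≤ maxMod L r) (hR2r : R ≤ maxMod L (2 * r)) :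
    log (maxMod L (2 * r)) ≤ log C + b * log (maxMod L r) := by
  have hM : 0 < maxMod L r := by linarith
  rw [← log_rpow hM, ← log_mul hC.ne' (rpow_pos_of_pos hM b).ne']
  refine log_le_log (by linarith) ?_
  simpa only [max_eq_left hRr] using maxMod_two_mul_le hC.le hb hL hfunc hup hr

lemma log_maxMod_two_mul_ge {C a R : ℝ} (hC : 0 < C) (hR : 0 ≤ R) (hL : Continuous L)
    (hfunc : ∀ x, f (L x) = L ((2 : ℝ) • x)) (hlow : ∀ y, R < ‖y‖ → C * ‖y‖ ^ a ≤ ‖f y‖)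
    (hr : 0 ≤ r) (hRr : R < maxMod L r) :
    log C + a * log (maxMod L r) ≤ log (maxMod L (2 * r)) := by
  have hM : 0 < maxMod L r := by linarith
  rw [← log_rpow hM, ← log_mul hC.ne' (rpow_pos_of_pos hM a).ne']
  exact log_le_log (by positivity) (le_maxMod_two_mul hL hfunc hlow hr hRr)

end MaxModulus

lemma mul_logb_rpow_one_div {x n : ℝ} (hx : 0 < x) (hn : n ≠ 0) :
    n * logb 2 (x ^ (1 / n)) = log x / log 2 := by
  rw [logb, log_rpow hx]
  field_simp

lemma log_add_mul_log_pos {C a R x : ℝ} (hC : 0 < C) (ha : 1 ≤ a) (hR : 0 < R) (hRx : R ≤ x)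
    (hCR : 1 < C * R ^ (a - 1)) :
    0 < log C + (a - 1) * log x := by
  have hlog := log_pos hCR
  rw [log_mul hC.ne' (by positivity), log_rpow hR] at hlog
  have := mul_le_mul_of_nonneg_left (log_le_log hR hRx) (sub_nonneg.2 ha)
  linarith

/-- Theorem 1.4 (order part): the order
`ρ_L = limsup_{r→∞} (m−1)·log log M(r,L) / log r` of a Poincaré linearizer satisfies
`(log d − log K)/log 2 ≤ ρ_L ≤ (log d + log K)/log 2`. -/
theorem order_of_linearizer {m : ℕ} (hm : 2 ≤ m) (d K : ℝ) (hK : 1 ≤ K) (hdK : K < d)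
    (a b : ℝ) (ha : a = (d / K) ^ ((1 : ℝ) / ((m : ℝ) - 1)))
    (hb : b = (d * K) ^ ((1 : ℝ) / ((m : ℝ) - 1)))
    (R0 C1 C2 : ℝ) (hR0 : 1 ≤ R0) (hC1 : 0 < C1) (hC2 : 1 ≤ C2)
    (hbig : 1 < C1 * R0 ^ (a - 1))
    (f L : EuclideanSpace ℝ (Fin m) → EuclideanSpace ℝ (Fin m))
    (hlow : ∀ y : EuclideanSpace ℝ (Fin m), R0 < ‖y‖ → C1 * ‖y‖ ^ a ≤ ‖f y‖)
    (hup : ∀ y : EuclideanSpace ℝ (Fin m), ‖f y‖ ≤ C2 * (max ‖y‖ R0) ^ b)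
    (hLcont : Continuous L)
    (hfunc : ∀ x : EuclideanSpace ℝ (Fin m), f (L x) = L ((2 : ℝ) • x))
    (hmono : ∀ r s : ℝ, 0 < r → r ≤ s → maxMod L r ≤ maxMod L s)
    (r1 : ℝ) (hr1 : 0 < r1) (hMr1 : R0 < maxMod L r1) :
    (Real.log d - Real.log K) / Real.log 2 ≤
      Filter.limsup
        (fun r : ℝ => ((m : ℝ) - 1) * Real.log (Real.log (maxMod L r)) / Real.log r)
        Filter.atTop ∧
    Filter.limsup
        (fun r : ℝ => ((m : ℝ) - 1) * Real.log (Real.log (maxMod L r)) / Real.log r)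
        Filter.atTop ≤ (Real.log d + Real.log K) / Real.log 2 := by
  have : NeZero m := ⟨by omega⟩
  have hk : (0 : ℝ) < m - 1 := by linarith [show (2 : ℝ) ≤ m by exact_mod_cast hm]
  obtain ⟨hKpos, hdpos⟩ : 0 < K ∧ 0 < d := ⟨by linarith, by linarith⟩
  have ha1 : 1 < a := ha ▸ one_lt_rpow ((one_lt_div hKpos).2 hdK) (by positivity)
  have hb1 : 1 < b := hb ▸ one_lt_rpow (by nlinarith) (by positivity)
  have hR0M : ∀ r, r1 ≤ r → R0 < maxMod L r := fun r hr => hMr1.trans_le (hmono r1 r hr1 hr)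
  have hlogM : 0 < log (maxMod L r1) := log_pos (hR0.trans_lt hMr1)
  have hmono' : MonotoneOn (fun r => log (maxMod L r)) (Ici r1) := fun r hr s _ hrs =>
    log_le_log (by linarith [hR0M r hr]) (hmono r s (hr1.trans_le hr) hrs)
  obtain ⟨B, hB, hFB⟩ := exists_rpow_bound_of_doubling_le (log_nonneg hC2) hb1 hr1 hmono' hlogM
    fun r hr => log_maxMod_two_mul_le (by linarith) (by linarith) hR0 hLcont hfunc hup
      (by linarith) (hR0M r hr).le (hR0M _ (by linarith)).le
  obtain ⟨A, hA, hFA⟩ := exists_rpow_bound_of_le_doubling (F := fun r => log (maxMod L r)) ha1 hr1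
    (fun r hr => log_maxMod_two_mul_ge hC1 (by linarith) hLcont hfunc hlow (by linarith)
      (hR0M r hr))
    (log_add_mul_log_pos hC1 ha1.le (by linarith) hMr1.le hbig)
  have hcF : ∀ᶠ r in atTop, log (maxMod L r1) ≤ log (maxMod L r) :=
    eventually_ge_atTop r1 |>.mono fun r hr => hmono' self_mem_Ici hr hr
  have hFB' : ∀ᶠ r in atTop, log (maxMod L r) ≤ B * r ^ logb 2 b :=
    eventually_ge_atTop r1 |>.mono hFB
  constructor
  · have := le_limsup_mul_log_div_log hk.le hA
      ((tendsto_pow_atTop_atTop_of_one_lt one_lt_two).atTop_mul_const hr1) hFA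
      (isBoundedUnder_le_mul_log_div_log hk.le hB (hcF.mono fun r h => hlogM.trans_le h) hFB')
    rwa [ha, mul_logb_rpow_one_div (div_pos hdpos hKpos) hk.ne',
      log_div hdpos.ne' hKpos.ne'] at this
  · have := limsup_mul_log_div_log_le hk.le hlogM hB hcF hFB'
    rwa [hb, mul_logb_rpow_one_div (mul_pos hdpos hKpos) hk.ne',
      log_mul hdpos.ne' hKpos.ne'] at this
end

section
/- Let m ≥ 2 be an integer and let f, L : ℝ^m → ℝ^m be maps satisfying f(L(x)) = L(2x) for all x ∈ ℝ^m. Suppose L(0) = x0, the complement ℝ^m \ L(ℝ^m) of the range of L is finite, and L is injective on some ball B(0,δ) with δ > 0. Then the set of omitted values of L equals the set of exceptional values of f with x0 removed; that is, ℝ^m \ L(ℝ^m) = { y ∈ ℝ^m : the backward orbit ⋃_{n≥1} f^{-n}(y) is a finite set } \ {x0}. -/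
/-!
The linearizer conjugates `x ↦ 2x` to `f`, so `f` maps the range of `L` into itself and the
backward orbit of an omitted value consists of omitted values; there are finitely many of them.
Conversely, `L x` with `x ≠ 0` has the preimages `L (2⁻ᵏ x)` under `f^[k]`, and these are pairwise
distinct for large `k` because `2⁻ᵏ x → 0` and `L` is injective near `0`.
-/

open Function Set Filter Topology

def backwardOrbit {α : Type*} (f : α → α) (y : α) : Set α :=
  ⋃ n ∈ Ici 1, f^[n] ⁻¹' {y}

theorem mem_backwardOrbit {α : Type*} {f : α → α} {y z : α} :
    z ∈ backwardOrbit f y ↔ ∃ n, 1 ≤ n ∧ f^[n] z = y := by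
  simp [backwardOrbit]

theorem backwardOrbit_subset_compl_range {α β : Type*} {f : α → α} {g : β → β} {L : β → α}
    (h : Semiconj L g f) {y : α} (hy : y ∉ range L) : backwardOrbit f y ⊆ (range L)ᶜ := by
  rintro _ hz ⟨x, rfl⟩
  obtain ⟨n, -, hn⟩ := mem_backwardOrbit.mp hz
  exact hy ⟨g^[n] x, (h.iterate_right n x).trans hn⟩

section NormedSpace

variable {𝕜 E : Type*} [NontriviallyNormedField 𝕜] [NormedAddCommGroup E] [NormedSpace 𝕜 E]

theorem injective_pow_smul {a : 𝕜} (ha₀ : a ≠ 0) (ha₁ : ‖a‖ ≠ 1) {x : E} (hx : x ≠ 0) :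
    Injective fun k : ℕ ↦ a ^ k • x := by
  intro k l hkl
  have hpow : a ^ k = a ^ l := smul_left_injective 𝕜 hx hkl
  exact pow_right_injective₀ (norm_pos_iff.mpr ha₀) ha₁ (by simpa using congrArg norm hpow)

theorem infinite_backwardOrbit_of_injOn {f L : E → E} {c : 𝕜} (hc : 1 < ‖c‖)
    (h : Semiconj L (c • ·) f) {U : Set E} (hU : U ∈ 𝓝 0) (hinj : InjOn L U) {x : E}
    (hx : x ≠ 0) : (backwardOrbit f (L x)).Infinite := by
  have hc₀ : c ≠ 0 := norm_pos_iff.mp (one_pos.trans hc)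
  have hc_inv : ‖c⁻¹‖ < 1 := by rw [norm_inv]; exact inv_lt_one_of_one_lt₀ hc
  have htendsto : Tendsto (fun k : ℕ ↦ c⁻¹ ^ k • x) atTop (𝓝 0) := by
    simpa using (tendsto_pow_atTop_nhds_zero_of_norm_lt_one hc_inv).smul_const x
  set S := {k : ℕ | 1 ≤ k ∧ c⁻¹ ^ k • x ∈ U}
  have hS : S.Infinite := Nat.frequently_atTop_iff_infinite.mp
    ((eventually_ge_atTop 1).and (htendsto hU)).frequently
  have hpreimages : InjOn (fun k : ℕ ↦ L (c⁻¹ ^ k • x)) S := fun k hk l hl hkl ↦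
    injective_pow_smul (inv_ne_zero hc₀) hc_inv.ne hx (hinj hk.2 hl.2 hkl)
  refine (hS.image hpreimages).mono ?_
  rintro _ ⟨k, hk, rfl⟩
  refine mem_backwardOrbit.mpr ⟨k, hk.1, ?_⟩
  rw [← h.iterate_right k, smul_iterate_apply, smul_smul, ← mul_pow, mul_inv_cancel₀ hc₀,
    one_pow, one_smul]

end NormedSpace

theorem omitted_eq_exceptional_general {m : ℕ}
    (f L : EuclideanSpace ℝ (Fin m) → EuclideanSpace ℝ (Fin m))
    (x0 : EuclideanSpace ℝ (Fin m))
    (hfunc : ∀ x : EuclideanSpace ℝ (Fin m), f (L x) = L ((2 : ℝ) • x))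
    (hL0 : L 0 = x0)
    (hfin : (Set.range L)ᶜ.Finite)
    (δ : ℝ) (hδ : 0 < δ) (hinj : Set.InjOn L (Metric.ball 0 δ)) :
    (Set.range L)ᶜ =
      {y : EuclideanSpace ℝ (Fin m) |
        (⋃ n ∈ Set.Ici 1, (f^[n]) ⁻¹' {y}).Finite} \ {x0} := by
  have hsemiconj : Semiconj L ((2 : ℝ) • ·) f := fun x ↦ (hfunc x).symm
  ext y
  constructor
  · intro hy
    exact ⟨hfin.subset (backwardOrbit_subset_compl_range hsemiconj hy),
      fun hy₀ ↦ hy ⟨0, hL0.trans hy₀.symm⟩⟩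
  · rintro ⟨hfinite, hy₀⟩ ⟨x, rfl⟩
    have hx : x ≠ 0 := by rintro rfl; exact hy₀ hL0
    exact infinite_backwardOrbit_of_injOn (by norm_num) hsemiconj
      (Metric.ball_mem_nhds 0 hδ) hinj hx hfinite

/-- Theorem 1.5 of the paper: the omitted values of a Poincaré linearizer `L` of `f`
are exactly the exceptional values of `f` other than the fixed point `x0`. -/
theorem omitted_eq_exceptional {m : ℕ} (hm : 2 ≤ m)
    (f L : EuclideanSpace ℝ (Fin m) → EuclideanSpace ℝ (Fin m))
    (x0 : EuclideanSpace ℝ (Fin m))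
    (hfunc : ∀ x : EuclideanSpace ℝ (Fin m), f (L x) = L ((2 : ℝ) • x))
    (hL0 : L 0 = x0)
    (hfin : (Set.range L)ᶜ.Finite)
    (δ : ℝ) (hδ : 0 < δ) (hinj : Set.InjOn L (Metric.ball 0 δ)) :
    (Set.range L)ᶜ =
      {y : EuclideanSpace ℝ (Fin m) |
        (⋃ n ∈ Set.Ici 1, (f^[n]) ⁻¹' {y}).Finite} \ {x0} :=
  omitted_eq_exceptional_general f L x0 hfunc hL0 hfin δ hδ hinj
end

section
/- Assume (G) and (L), and additionally that ‖L(x)‖ ≤ R0 whenever ‖x‖ ≤ 1. Suppose there exist reals 0 < s ≤ t < 1 and a compact connected set Γ ⊆ { x ∈ ℝ^m : s ≤ ‖x‖ ≤ t } such that 0 does not lie in the unbounded component of ℝ^m \ Γ, and suppose there exists j0 ∈ ℕ with ‖f^{j0}(L(x))‖ > R0 for all x ∈ Γ. Let μ > (log d + log K)/(log d − log K). Then there exists R3 > 0 such that for every r > R3 there is an integer ℓ ≥ 1 for which the scaled set Γ^r = { 2^ℓ · x : x ∈ Γ } satisfies: Γ^r ⊆ { x : r < ‖x‖ ≤ r^μ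 }, 0 does not lie in the unbounded component of ℝ^m \ Γ^r, and min_{x ∈ Γ^r} ‖L(x)‖ > M(r,L). -/
/-!
The functional equation gives `L (2^ℓ • x) = f^[ℓ] (L x)`. Iterating the upper growth bound of
`f` from the ball of radius `R0`, which contains `L` of the unit ball, bounds the maximum modulus
of `L` on the sphere of radius `r ≤ 2^n` by `exp (O (b^n))`; iterating the lower bound from the
points `f^[j0] (L x)`, `x ∈ Γ`, which lie outside that ball, gives `‖L‖ ≥ exp (c a^k)` with `c > 0`
on `2^(k+j0) Γ`. Taking `2^n ≈ r` and `k ≈ ν n` with `log b / log a < ν < μ`, the term `a^k`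
dominates `b^n` while `2^(k+j0) Γ` stays in the annulus `r < ‖x‖ ≤ r^μ`; scaling preserves the
separation of `0` from infinity.
-/

open Filter Real

section Iterates

variable {X : Type*} (f : X → X)

theorem rpow_pow_le_iterate (φ : X → ℝ) {T a : ℝ} (hT : 1 ≤ T) (ha : 1 ≤ a)
    (hf : ∀ z, T < φ z → φ z ^ a ≤ φ (f z)) {y : X} (hy : T < φ y) :
    ∀ k : ℕ, φ y ^ (a ^ k) ≤ φ (f^[k] y)
  | 0 => by simp
  | k + 1 => by
    have ih := rpow_pow_le_iterate φ hT ha hf hy k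
    have hy1 : 1 ≤ φ y := hT.trans hy.le
    have hlarge : T < φ (f^[k] y) :=
      hy.trans_le ((Real.self_le_rpow_of_one_le hy1 (one_le_pow₀ ha)).trans ih)
    calc φ y ^ (a ^ (k + 1)) = (φ y ^ (a ^ k)) ^ a := by
          rw [pow_succ, Real.rpow_mul (by linarith)]
      _ ≤ φ (f^[k] y) ^ a := Real.rpow_le_rpow (by positivity) ih (by linarith)
      _ ≤ φ (f^[k + 1] y) := by rw [Function.iterate_succ_apply']; exact hf _ hlarge

theorem iterate_le_rpow_pow (ψ : X → ℝ) {T b : ℝ} (hT : 1 ≤ T) (hb : 1 ≤ b)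
    (hf : ∀ z, ψ (f z) ≤ max (ψ z) T ^ b) {y : X} (hy : ψ y ≤ T) :
    ∀ k : ℕ, ψ (f^[k] y) ≤ T ^ (b ^ k)
  | 0 => by simpa using hy
  | k + 1 => by
    have ih := iterate_le_rpow_pow ψ hT hb hf hy k
    have hmax : max (ψ (f^[k] y)) T ≤ T ^ (b ^ k) :=
      max_le ih (Real.self_le_rpow_of_one_le hT (one_le_pow₀ hb))
    calc ψ (f^[k + 1] y) ≤ max (ψ (f^[k] y)) T ^ b := by
          rw [Function.iterate_succ_apply']; exact hf _
      _ ≤ (T ^ (b ^ k)) ^ b := Real.rpow_le_rpow (by positivity) hmax (by linarith)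
      _ = T ^ (b ^ (k + 1)) := by rw [pow_succ, Real.rpow_mul (by linarith)]

end Iterates

theorem mul_rpow_eq_of_rpow_sub_one_eq {ε C p x : ℝ} (hε : 0 < ε) (hx : 0 ≤ x)
    (h : ε ^ (p - 1) = C) : (ε * x) ^ p = ε * (C * x ^ p) := by
  rw [Real.mul_rpow hε.le hx, ← h, Real.rpow_sub_one hε.ne']
  field_simp

section Growth

variable {E : Type*} [SeminormedAddGroup E] {f : E → E} {R0 : ℝ}

theorem exists_exp_le_norm_iterate {a C : ℝ} (ha : 1 < a) (hC : 0 < C) (hR0 : 0 ≤ R0)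
    (hbig : 1 < C * R0 ^ (a - 1)) (hlow : ∀ y, R0 < ‖y‖ → C * ‖y‖ ^ a ≤ ‖f y‖) :
    ∃ P > 0, ∃ R, ∀ y, R0 < ‖y‖ → ∀ k : ℕ, exp (P * a ^ k + R) ≤ ‖f^[k] y‖ := by
  -- With `ε ^ (a - 1) = C` the lower bound reads `(ε * ‖y‖) ^ a ≤ ε * ‖f y‖`.
  set ε := C ^ (a - 1)⁻¹
  have hε : 0 < ε := by positivity
  have hεC : ε ^ (a - 1) = C := Real.rpow_inv_rpow hC.le (by linarith)
  have hc : 1 < ε * R0 := by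
    rw [← hεC, ← Real.mul_rpow hε.le hR0] at hbig
    by_contra! h
    exact hbig.not_ge (Real.rpow_le_one (by positivity) h (by linarith))
  refine ⟨log (ε * R0), Real.log_pos hc, -log ε, fun y hy k => ?_⟩
  have hεy : ε * R0 < ε * ‖y‖ := mul_lt_mul_of_pos_left hy hε
  have hiter := rpow_pow_le_iterate f (fun z => ε * ‖z‖) hc.le ha.le (fun z hz => by
    rw [mul_rpow_eq_of_rpow_sub_one_eq hε (norm_nonneg z) hεC]
    exact mul_le_mul_of_nonneg_left (hlow z (lt_of_mul_lt_mul_left hz hε.le)) hε.le) hεy k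
  calc exp (log (ε * R0) * a ^ k + -log ε) = ε⁻¹ * (ε * R0) ^ (a ^ k) := by
        rw [exp_add, exp_neg, exp_log hε, mul_comm, Real.rpow_def_of_pos (by linarith), mul_comm]
    _ ≤ ε⁻¹ * (ε * ‖y‖) ^ (a ^ k) := by gcongr
    _ ≤ ε⁻¹ * (ε * ‖f^[k] y‖) := by gcongr
    _ = ‖f^[k] y‖ := by field_simp

theorem exists_norm_iterate_le_exp {b C : ℝ} (hb : 1 < b) (hC : 1 ≤ C) (hR0 : 1 ≤ R0)
    (hup : ∀ y, ‖f y‖ ≤ C * max ‖y‖ R0 ^ b) :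
    ∃ Q R, ∀ y, ‖y‖ ≤ R0 → ∀ k : ℕ, ‖f^[k] y‖ ≤ exp (Q * b ^ k + R) := by
  set η := C ^ (b - 1)⁻¹
  have hη : 1 ≤ η := Real.one_le_rpow hC (inv_nonneg.2 (by linarith))
  have hηC : η ^ (b - 1) = C := Real.rpow_inv_rpow (by linarith) (by linarith)
  have hT : 1 ≤ η * R0 := one_le_mul_of_one_le_of_one_le hη hR0
  refine ⟨log (η * R0), -log η, fun y hy k => ?_⟩
  have hiter := iterate_le_rpow_pow f (fun z => η * ‖z‖) hT hb.le (fun z => by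
    rw [← mul_max_of_nonneg _ _ (by linarith), mul_rpow_eq_of_rpow_sub_one_eq (by linarith)
      ((norm_nonneg z).trans (le_max_left _ _)) hηC]
    exact mul_le_mul_of_nonneg_left (hup z) (by linarith))
    (mul_le_mul_of_nonneg_left hy (by linarith)) k
  calc ‖f^[k] y‖ = η⁻¹ * (η * ‖f^[k] y‖) := by field_simp
    _ ≤ η⁻¹ * (η * R0) ^ (b ^ k) := by gcongr
    _ = exp (log (η * R0) * b ^ k + -log η) := by
        rw [exp_add, exp_neg, exp_log (by linarith), mul_comm, Real.rpow_def_of_pos (by linarith),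
          mul_comm]

end Growth

theorem eventually_mul_pow_add_lt_mul_pow {A B P : ℝ} (Q R : ℝ) (hB : 0 ≤ B) (hBA : B < A)
    (hA : 1 < A) (hP : 0 < P) : ∀ᶠ n : ℕ in atTop, Q * B ^ n + R < P * A ^ n := by
  have hA0 : 0 < A := zero_lt_one.trans hA
  have hratio : Tendsto (fun n : ℕ => P - Q * (B / A) ^ n) atTop (nhds P) := by
    simpa using (tendsto_pow_atTop_nhds_zero_of_lt_one (div_nonneg hB hA0.le)
      ((div_lt_one hA0).2 hBA)).const_mul Q |>.const_sub P
  have hgrowth := (tendsto_pow_atTop_atTop_of_one_lt hA).atTop_mul_pos hP hratio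
  filter_upwards [hgrowth.eventually_gt_atTop R] with n hn
  have : A ^ n * (P - Q * (B / A) ^ n) = P * A ^ n - Q * B ^ n := by
    rw [div_pow, mul_sub, mul_left_comm, mul_div_cancel₀ _ (pow_pos hA0 n).ne']
    ring
  linarith

theorem rpow_pow_le_pow_natCeil {B : ℝ} (hB : 1 ≤ B) (ν : ℝ) (n : ℕ) :
    (B ^ ν) ^ n ≤ B ^ ⌈ν * n⌉₊ := by
  rw [← Real.rpow_mul_natCast (by linarith), ← Real.rpow_natCast]
  exact Real.rpow_le_rpow_of_exponent_le hB (Nat.le_ceil _)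

theorem pow_natCeil_le_mul_rpow_pow {B ν : ℝ} (hB : 1 ≤ B) (hν : 0 ≤ ν) (n : ℕ) :
    B ^ ⌈ν * n⌉₊ ≤ B * (B ^ ν) ^ n := by
  rw [← Real.rpow_mul_natCast (by linarith), ← Real.rpow_natCast, mul_comm B,
    ← Real.rpow_add_one (by linarith)]
  exact Real.rpow_le_rpow_of_exponent_le hB (Nat.ceil_lt_add_one (by positivity)).le

theorem exists_two_pow_scale {s μ ν a b P Q R : ℝ} (j : ℕ) (hs : 0 < s) (hν : 1 < ν)
    (hνμ : ν < μ) (ha : 1 < a) (hb : 0 ≤ b) (hab : b < a ^ ν) (hP : 0 < P) :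
    ∃ R3 > 0, ∀ r > R3, ∃ n k : ℕ, 1 ≤ k ∧ r ≤ 2 ^ n ∧ r < 2 ^ (k + j) * s ∧
      (2 : ℝ) ^ (k + j) ≤ r ^ μ ∧ Q * b ^ n + R < P * a ^ k := by
  have h2ν : (2 : ℝ) < 2 ^ ν := by
    simpa using Real.rpow_lt_rpow_of_exponent_lt one_lt_two hν
  have h2μ : (2 : ℝ) ^ ν < 2 ^ μ := Real.rpow_lt_rpow_of_exponent_lt one_lt_two hνμ
  obtain ⟨N, hN⟩ := eventually_atTop.1 <|
    (eventually_mul_pow_add_lt_mul_pow 1 0 zero_le_two h2ν (by linarith) hs).and <|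
    (eventually_mul_pow_add_lt_mul_pow (2 ^ (j + 1)) 0 (by positivity) h2μ (by linarith)
      (by positivity : 0 < ((2 : ℝ) ^ μ)⁻¹)).and <|
    eventually_mul_pow_add_lt_mul_pow Q R hb hab (Real.one_lt_rpow ha (by linarith)) hP
  refine ⟨2 ^ N, by positivity, fun r hr => ?_⟩
  obtain ⟨n, h2n, hr2n⟩ :=
    exists_nat_pow_near ((one_le_pow₀ one_le_two).trans hr.le) one_lt_two
  obtain ⟨hsn, hμn, hcmp⟩ :=
    hN (n + 1) ((pow_lt_pow_iff_right₀ one_lt_two).1 (hr.trans hr2n)).le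
  set k := ⌈ν * ↑(n + 1)⌉₊
  have h2k : (2 : ℝ) ^ k ≤ 2 * (2 ^ ν) ^ (n + 1) :=
    pow_natCeil_le_mul_rpow_pow one_le_two (by linarith) (n + 1)
  refine ⟨n + 1, k, Nat.ceil_pos.2 (by positivity), hr2n.le, ?_, ?_, ?_⟩
  · calc r < 1 * 2 ^ (n + 1) + 0 := by simpa using hr2n
      _ < s * (2 ^ ν) ^ (n + 1) := hsn
      _ ≤ s * 2 ^ k := by gcongr; exact rpow_pow_le_pow_natCeil one_le_two ν _
      _ ≤ 2 ^ (k + j) * s := by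
        rw [pow_add, mul_comm]
        gcongr
        exact le_mul_of_one_le_right (by positivity) (one_le_pow₀ one_le_two)
  · refine le_of_lt ?_
    calc (2 : ℝ) ^ (k + j) ≤ 2 ^ (j + 1) * (2 ^ ν) ^ (n + 1) + 0 := by
          rw [pow_add, add_zero, pow_succ, mul_comm, mul_assoc]; gcongr
      _ < ((2 : ℝ) ^ μ)⁻¹ * (2 ^ μ) ^ (n + 1) := hμn
      _ = (2 ^ n) ^ μ := by
          rw [pow_succ, mul_comm, mul_assoc, mul_inv_cancel₀ (by positivity), mul_one,
            Real.rpow_pow_comm zero_le_two]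
      _ ≤ r ^ μ := Real.rpow_le_rpow (by positivity) h2n (by linarith)
  · calc Q * b ^ (n + 1) + R < P * (a ^ ν) ^ (n + 1) := hcmp
      _ ≤ P * a ^ k := by gcongr; exact rpow_pow_le_pow_natCeil ha.le ν _

theorem apply_pow_smul_eq_iterate {M X Y : Type*} [Monoid M] [MulAction M X] {L : X → Y}
    {f : Y → Y} {c : M} (h : ∀ x, f (L x) = L (c • x)) (n : ℕ) (x : X) :
    L (c ^ n • x) = f^[n] (L x) := by
  have := Function.Semiconj.iterate_right (f := L) (ga := (c • ·)) (fun x => (h x).symm) n x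
  rwa [smul_iterate] at this

theorem image_smul_subset_annulus {E : Type*} [SeminormedAddCommGroup E] [NormedSpace ℝ E]
    {Γ : Set E} {s t r ρ c : ℝ} (hc : 0 ≤ c) (hΓ : Γ ⊆ {x | s ≤ ‖x‖ ∧ ‖x‖ ≤ t})
    (hr : r < c * s) (hρ : c * t ≤ ρ) : (fun x => c • x) '' Γ ⊆ {x | r < ‖x‖ ∧ ‖x‖ ≤ ρ} := by
  rintro _ ⟨x, hx, rfl⟩
  show r < ‖c • x‖ ∧ ‖c • x‖ ≤ ρ
  rw [norm_smul, Real.norm_of_nonneg hc]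
  exact ⟨hr.trans_le (by gcongr; exact (hΓ hx).1), le_trans (by gcongr; exact (hΓ hx).2) hρ⟩

theorem isBounded_connectedComponentIn_compl_image_smul {𝕜 E : Type*} [NormedField 𝕜]
    [NormedAddCommGroup E] [NormedSpace 𝕜 E] {Γ : Set E} {c : 𝕜} (hc : c ≠ 0) (h0 : (0 : E) ∉ Γ)
    (hΓ : Bornology.IsBounded (connectedComponentIn Γᶜ 0)) :
    Bornology.IsBounded (connectedComponentIn ((fun x => c • x) '' Γ)ᶜ 0) := by
  have key := (Homeomorph.smulOfNeZero c hc).image_connectedComponentIn (s := Γᶜ) (x := 0) h0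
  rw [Set.image_compl_eq (Homeomorph.smulOfNeZero c hc).bijective] at key
  simp only [Homeomorph.smulOfNeZero_apply, smul_zero, Set.image_smul] at key ⊢
  rw [← key]
  exact hΓ.smul₀ c

theorem maxMod_le_exp {m : ℕ} {f L : EuclideanSpace ℝ (Fin m) → EuclideanSpace ℝ (Fin m)}
    {R0 b Q R r : ℝ} {n : ℕ} (hfunc : ∀ x, f (L x) = L ((2 : ℝ) • x))
    (hsmall : ∀ x, ‖x‖ ≤ 1 → ‖L x‖ ≤ R0)
    (hiter : ∀ y, ‖y‖ ≤ R0 → ∀ k : ℕ, ‖f^[k] y‖ ≤ exp (Q * b ^ k + R)) (hr : r ≤ 2 ^ n) :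
    maxMod L r ≤ exp (Q * b ^ n + R) := by
  refine Real.sSup_le ?_ (exp_pos _).le
  rintro _ ⟨x, hx, rfl⟩
  have hy : ‖((2 : ℝ) ^ n)⁻¹ • x‖ ≤ 1 := by
    rw [norm_smul, norm_inv, norm_pow, Real.norm_two, hx, inv_mul_le_iff₀ (by positivity),
      mul_one]
    exact hr
  show ‖L x‖ ≤ _
  rw [← smul_inv_smul₀ (by positivity : (2 : ℝ) ^ n ≠ 0) x, apply_pow_smul_eq_iterate hfunc]
  exact hiter _ (hsmall _ hy) n

theorem one_lt_of_log_add_div_log_sub_lt {d K ν : ℝ} (hK : 1 ≤ K) (hdK : K < d)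
    (hν : (log d + log K) / (log d - log K) < ν) : 1 < ν := by
  have hlog : log K < log d := Real.log_lt_log (by linarith) hdK
  refine lt_of_le_of_lt ((one_le_div (by linarith)).2 ?_) hν
  linarith [Real.log_nonneg hK]

theorem mul_rpow_lt_div_rpow_rpow {d K ν e : ℝ} (hK : 1 ≤ K) (hdK : K < d) (he : 0 < e)
    (hν : (log d + log K) / (log d - log K) < ν) : (d * K) ^ e < ((d / K) ^ e) ^ ν := by
  have hK0 : 0 < K := by linarith
  have hd0 : 0 < d := by linarith
  have hlog : 0 < log d - log K := by linarith [Real.log_lt_log hK0 hdK]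
  rw [← Real.rpow_mul (by positivity), mul_comm e, Real.rpow_mul (by positivity)]
  refine Real.rpow_lt_rpow (by positivity) ?_ he
  rw [← Real.exp_log (by positivity : 0 < d * K), Real.rpow_def_of_pos (by positivity),
    Real.exp_lt_exp, Real.log_mul hd0.ne' hK0.ne', Real.log_div hd0.ne' hK0.ne']
  rw [div_lt_iff₀ hlog] at hν
  linarith

theorem min_modulus_on_continuum_general {m : ℕ} (hm : 2 ≤ m) (d K : ℝ) (hK : 1 ≤ K) (hdK : K < d)
    (a b : ℝ) (ha : a = (d / K) ^ ((1 : ℝ) / ((m : ℝ) - 1)))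
    (hb : b = (d * K) ^ ((1 : ℝ) / ((m : ℝ) - 1)))
    (R0 C1 C2 : ℝ) (hR0 : 1 ≤ R0) (hC1 : 0 < C1) (hC2 : 1 ≤ C2)
    (hbig : 1 < C1 * R0 ^ (a - 1))
    (f L : EuclideanSpace ℝ (Fin m) → EuclideanSpace ℝ (Fin m))
    (hlow : ∀ y : EuclideanSpace ℝ (Fin m), R0 < ‖y‖ → C1 * ‖y‖ ^ a ≤ ‖f y‖)
    (hup : ∀ y : EuclideanSpace ℝ (Fin m), ‖f y‖ ≤ C2 * (max ‖y‖ R0) ^ b)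
    (hfunc : ∀ x : EuclideanSpace ℝ (Fin m), f (L x) = L ((2 : ℝ) • x))
    (hLsmall : ∀ x : EuclideanSpace ℝ (Fin m), ‖x‖ ≤ 1 → ‖L x‖ ≤ R0)
    (s t : ℝ) (hs : 0 < s) (ht : t < 1)
    (Γ : Set (EuclideanSpace ℝ (Fin m)))
    (hΓann : Γ ⊆ {x : EuclideanSpace ℝ (Fin m) | s ≤ ‖x‖ ∧ ‖x‖ ≤ t})
    (hΓsep : Bornology.IsBounded (connectedComponentIn Γᶜ 0))
    (hesc : ∃ j0 : ℕ, ∀ x ∈ Γ, R0 < ‖f^[j0] (L x)‖)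
    (μ : ℝ) (hμ : (Real.log d + Real.log K) / (Real.log d - Real.log K) < μ) :
    ∃ R3 : ℝ, 0 < R3 ∧ ∀ r : ℝ, R3 < r → ∃ ℓ : ℕ, 1 ≤ ℓ ∧
      (fun x => ((2 : ℝ) ^ ℓ) • x) '' Γ ⊆
        {x : EuclideanSpace ℝ (Fin m) | r < ‖x‖ ∧ ‖x‖ ≤ r ^ μ} ∧
      Bornology.IsBounded
        (connectedComponentIn ((fun x => ((2 : ℝ) ^ ℓ) • x) '' Γ)ᶜ 0) ∧
      ∀ x ∈ (fun x => ((2 : ℝ) ^ ℓ) • x) '' Γ, maxMod L r < ‖L x‖ := by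
  obtain ⟨j0, hj0⟩ := hesc
  have he : 0 < (1 : ℝ) / ((m : ℝ) - 1) :=
    one_div_pos.2 (by linarith [show (2 : ℝ) ≤ m by exact_mod_cast hm])
  have ha1 : 1 < a := ha ▸ Real.one_lt_rpow ((one_lt_div (by linarith)).2 hdK) he
  have hb1 : 1 < b := hb ▸ Real.one_lt_rpow (by nlinarith) he
  obtain ⟨ν, hρν, hνμ⟩ := exists_between hμ
  obtain ⟨P, hP, Rlow, hlowIt⟩ := exists_exp_le_norm_iterate ha1 hC1 (by linarith) hbig hlow
  obtain ⟨Q, Rup, hupIt⟩ := exists_norm_iterate_le_exp hb1 hC2 hR0 hup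
  obtain ⟨R3, hR3, hscale⟩ := exists_two_pow_scale (Q := Q) (R := Rup - Rlow) j0 hs
    (one_lt_of_log_add_div_log_sub_lt hK hdK hρν) hνμ ha1 (by linarith)
    (ha ▸ hb ▸ mul_rpow_lt_div_rpow_rpow hK hdK he hρν) hP
  refine ⟨R3, hR3, fun r hr => ?_⟩
  obtain ⟨n, k, hk, hrn, hrs, hμr, hcmp⟩ := hscale r hr
  have h0 : (0 : EuclideanSpace ℝ (Fin m)) ∉ Γ := fun h => by
    simpa using hs.trans_le (hΓann h).1
  refine ⟨k + j0, by omega,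
    image_smul_subset_annulus (by positivity) hΓann hrs
      ((mul_le_of_le_one_right (by positivity) ht.le).trans hμr),
    isBounded_connectedComponentIn_compl_image_smul (by positivity) h0 hΓsep, ?_⟩
  rintro _ ⟨x, hx, rfl⟩
  calc maxMod L r ≤ exp (Q * b ^ n + Rup) := maxMod_le_exp hfunc hLsmall hupIt hrn
    _ < exp (P * a ^ k + Rlow) := Real.exp_lt_exp.2 (by linarith)
    _ ≤ ‖f^[k] (f^[j0] (L x))‖ := hlowIt _ (hj0 x hx) k
    _ = ‖L ((2 : ℝ) ^ (k + j0) • x)‖ := by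
        rw [apply_pow_smul_eq_iterate hfunc, Function.iterate_add_apply]

/-- Lemma 7.3 of the paper (minimum modulus growth): for every `r > R3` there is a scaled
copy `Γ^r = 2^ℓ Γ` of the separating continuum `Γ`, lying in the annulus `r < ‖x‖ ≤ r^μ`,
separating `0` from infinity, on which `‖L‖` exceeds `M(r,L)`. -/
theorem min_modulus_on_continuum {m : ℕ} (hm : 2 ≤ m) (d K : ℝ) (hK : 1 ≤ K) (hdK : K < d)
    (a b : ℝ) (ha : a = (d / K) ^ ((1 : ℝ) / ((m : ℝ) - 1)))
    (hb : b = (d * K) ^ ((1 : ℝ) / ((m : ℝ) - 1)))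
    (R0 C1 C2 : ℝ) (hR0 : 1 ≤ R0) (hC1 : 0 < C1) (hC2 : 1 ≤ C2)
    (hbig : 1 < C1 * R0 ^ (a - 1))
    (f L : EuclideanSpace ℝ (Fin m) → EuclideanSpace ℝ (Fin m))
    (hlow : ∀ y : EuclideanSpace ℝ (Fin m), R0 < ‖y‖ → C1 * ‖y‖ ^ a ≤ ‖f y‖)
    (hup : ∀ y : EuclideanSpace ℝ (Fin m), ‖f y‖ ≤ C2 * (max ‖y‖ R0) ^ b)
    (hLcont : Continuous L)
    (hfunc : ∀ x : EuclideanSpace ℝ (Fin m), f (L x) = L ((2 : ℝ) • x))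
    (hLsmall : ∀ x : EuclideanSpace ℝ (Fin m), ‖x‖ ≤ 1 → ‖L x‖ ≤ R0)
    (s t : ℝ) (hs : 0 < s) (hst : s ≤ t) (ht : t < 1)
    (Γ : Set (EuclideanSpace ℝ (Fin m)))
    (hΓcompact : IsCompact Γ) (hΓconn : IsConnected Γ)
    (hΓann : Γ ⊆ {x : EuclideanSpace ℝ (Fin m) | s ≤ ‖x‖ ∧ ‖x‖ ≤ t})
    (hΓsep : Bornology.IsBounded (connectedComponentIn Γᶜ 0))
    (hesc : ∃ j0 : ℕ, ∀ x ∈ Γ, R0 < ‖f^[j0] (L x)‖)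
    (μ : ℝ) (hμ : (Real.log d + Real.log K) / (Real.log d - Real.log K) < μ) :
    ∃ R3 : ℝ, 0 < R3 ∧ ∀ r : ℝ, R3 < r → ∃ ℓ : ℕ, 1 ≤ ℓ ∧
      (fun x => ((2 : ℝ) ^ ℓ) • x) '' Γ ⊆
        {x : EuclideanSpace ℝ (Fin m) | r < ‖x‖ ∧ ‖x‖ ≤ r ^ μ} ∧
      Bornology.IsBounded
        (connectedComponentIn ((fun x => ((2 : ℝ) ^ ℓ) • x) '' Γ)ᶜ 0) ∧
      ∀ x ∈ (fun x => ((2 : ℝ) ^ ℓ) • x) '' Γ, maxMod L r < ‖L x‖ :=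
  min_modulus_on_continuum_general hm d K hK hdK a b ha hb R0 C1 C2 hR0 hC1 hC2 hbig f L hlow hup
    hfunc hLsmall s t hs ht Γ hΓann hΓsep hesc μ hμ
end

section
/- Let m ≥ 2 be an integer, let L : ℝ^m → ℝ^m be continuous and open (i.e., L maps open sets to open sets), let G ⊂ ℝ^m be a nonempty bounded open connected set, and let s > 0. Suppose ‖L(x)‖ ≥ s for every x ∈ ∂G, and suppose there exists x1 ∈ G with ‖L(x1)‖ < s. Then the open ball B(0,s) is contained in L(G), and the connected component of ℝ^m \ L(∂G) that contains B(0,s) is contained in L(G); in particular this component is bounded. -/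
/-!
A point of `closure (L '' G)` lies in `L '' closure G = L '' G ∪ L '' ∂G`, because `L` maps the
compact set `closure G` onto a closed set. Hence `L '' G` is relatively clopen in any set `S`
that avoids `L '' ∂G`, and a preconnected such `S` meeting `L '' G` lies inside it. Both the
ball `B(0, s)` and the component of `(L '' ∂G)ᶜ` through `0` are of this kind, and the
component is then bounded as a subset of the compact set `L '' closure G`.
-/

open Set Metric

theorem closure_image_subset_image_union_image_frontier {X Y : Type*} [TopologicalSpace X]
    [TopologicalSpace Y] [T2Space Y] {f : X → Y} {G : Set X}
    (hf : ContinuousOn f (closure G)) (hG : IsCompact (closure G)) :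
    closure (f '' G) ⊆ f '' G ∪ f '' frontier G := by
  rw [← image_union, ← closure_eq_self_union_frontier]
  exact closure_minimal (image_mono subset_closure) (hG.image_of_continuousOn hf).isClosed

theorem IsPreconnected.subset_image_of_disjoint_image_frontier {X Y : Type*}
    [TopologicalSpace X] [TopologicalSpace Y] [T2Space Y] {f : X → Y} {G : Set X} {S : Set Y}
    (hf : ContinuousOn f (closure G)) (hG : IsCompact (closure G)) (hfG : IsOpen (f '' G))
    (hS : IsPreconnected S) (hSG : (S ∩ f '' G).Nonempty)
    (hSfr : Disjoint S (f '' frontier G)) :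
    S ⊆ f '' G := by
  refine hS.subset_of_closure_inter_subset hfG hSG ?_
  rintro y ⟨hyG, hyS⟩
  exact (closure_image_subset_image_union_image_frontier hf hG hyG).resolve_right
    (disjoint_left.mp hSfr hyS)

theorem covering_step_general {m : ℕ}
    (L : EuclideanSpace ℝ (Fin m) → EuclideanSpace ℝ (Fin m))
    (hLcont : Continuous L) (hLopen : IsOpenMap L)
    (G : Set (EuclideanSpace ℝ (Fin m)))
    (hGbdd : Bornology.IsBounded G) (hGopen : IsOpen G)
    (s : ℝ)
    (hbdry : ∀ x ∈ frontier G, s ≤ ‖L x‖)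
    (hx1 : ∃ x1 ∈ G, ‖L x1‖ < s) :
    Metric.ball (0 : EuclideanSpace ℝ (Fin m)) s ⊆ L '' G ∧
    connectedComponentIn (L '' frontier G)ᶜ (0 : EuclideanSpace ℝ (Fin m)) ⊆ L '' G ∧
    Bornology.IsBounded
      (connectedComponentIn (L '' frontier G)ᶜ (0 : EuclideanSpace ℝ (Fin m))) := by
  obtain ⟨x1, hx1G, hx1s⟩ := hx1
  have hK : IsCompact (closure G) := hGbdd.isCompact_closure
  have hLG : IsOpen (L '' G) := hLopen G hGopen
  have hball_fr : Disjoint (ball 0 s) (L '' frontier G) := by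
    refine disjoint_left.mpr ?_
    rintro _ hy ⟨x, hx, rfl⟩
    exact (hbdry x hx).not_gt (by simpa using hy)
  have hball : ball 0 s ⊆ L '' G :=
    (convex_ball 0 s).isPreconnected.subset_image_of_disjoint_image_frontier
      hLcont.continuousOn hK hLG ⟨L x1, by simpa using hx1s, mem_image_of_mem L hx1G⟩ hball_fr
  have h0 : (0 : EuclideanSpace ℝ (Fin m)) ∈ ball 0 s :=
    mem_ball_self ((norm_nonneg _).trans_lt hx1s)
  have hcomp : connectedComponentIn (L '' frontier G)ᶜ 0 ⊆ L '' G :=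
    isPreconnected_connectedComponentIn.subset_image_of_disjoint_image_frontier
      hLcont.continuousOn hK hLG
      ⟨0, mem_connectedComponentIn (disjoint_left.mp hball_fr h0), hball h0⟩
      (disjoint_compl_left.mono_left (connectedComponentIn_subset _ _))
  exact ⟨hball, hcomp,
    (hK.image hLcont).isBounded.subset (hcomp.trans (image_mono subset_closure))⟩

/-- The covering step used in Section 7.2 of the paper: if a continuous open map `L`
has `‖L‖ ≥ s` on `∂G` and `‖L x1‖ < s` for some `x1 ∈ G`, then `B(0,s) ⊆ L(G)` and the
connected component of `ℝ^m \ L(∂G)` containing `B(0,s)` is contained in `L(G)`;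
in particular this component is bounded. -/
theorem covering_step {m : ℕ} (hm : 2 ≤ m)
    (L : EuclideanSpace ℝ (Fin m) → EuclideanSpace ℝ (Fin m))
    (hLcont : Continuous L) (hLopen : IsOpenMap L)
    (G : Set (EuclideanSpace ℝ (Fin m))) (hGne : G.Nonempty)
    (hGbdd : Bornology.IsBounded G) (hGopen : IsOpen G) (hGconn : IsConnected G)
    (s : ℝ) (hs : 0 < s)
    (hbdry : ∀ x ∈ frontier G, s ≤ ‖L x‖)
    (hx1 : ∃ x1 ∈ G, ‖L x1‖ < s) :
    Metric.ball (0 : EuclideanSpace ℝ (Fin m)) s ⊆ L '' G ∧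
    connectedComponentIn (L '' frontier G)ᶜ (0 : EuclideanSpace ℝ (Fin m)) ⊆ L '' G ∧
    Bornology.IsBounded
      (connectedComponentIn (L '' frontier G)ᶜ (0 : EuclideanSpace ℝ (Fin m))) :=
  covering_step_general L hLcont hLopen G hGbdd hGopen s hbdry hx1
end

section
/- Let m ≥ 2 be an integer and let Γ ⊂ ℝ^m be a compact connected set with Γ ⊆ { x : r < ‖x‖ < R' } for some reals 0 < r < R', and suppose 0 does not lie in the unbounded component of ℝ^m \ Γ. Let G be the connected component of ℝ^m \ Γ containing 0. Then G is a bounded, topologically convex domain; moreover the closed ball { x : ‖x‖ ≤ r } is contained in G, G ⊆ { x : ‖x‖ < R' }, and ∂G ⊆ Γ. -/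
open Set Metric

/-- A point of the closure of a connected component of an open set that lies in the open set
belongs to the component. -/
lemma aux_closure_connectedComponentIn {α : Type*} [TopologicalSpace α]
    [LocallyConnectedSpace α] {U : Set α} (hU : IsOpen U) (y : α) :
    closure (connectedComponentIn U y) ∩ U ⊆ connectedComponentIn U y := by
  rintro z ⟨hz, hzU⟩
  have hopen : IsOpen (connectedComponentIn U z) := hU.connectedComponentIn
  have hmem : z ∈ connectedComponentIn U z := mem_connectedComponentIn hzU
  obtain ⟨w, hw1, hw2⟩ := mem_closure_iff.mp hz _ hopen hmem
  have h1 := connectedComponentIn_eq (F := U) (x := z) hw1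
  have h2 := connectedComponentIn_eq (F := U) (x := y) hw2
  rw [h2, ← h1]
  exact hmem

/-- The topological lemma underlying Section 7.2 of the paper: if `Γ` is a compact
connected set in the annulus `r < ‖x‖ < R'` and `0` is not in the unbounded component
of the complement of `Γ`, then the component `G` of `ℝ^m \ Γ` containing `0` is a
bounded topologically convex domain with `closedBall 0 r ⊆ G ⊆ ball 0 R'` and `∂G ⊆ Γ`. -/
theorem separating_continuum_component {m : ℕ} (hm : 2 ≤ m)
    (Γ : Set (EuclideanSpace ℝ (Fin m)))
    (hΓcompact : IsCompact Γ) (hΓconn : IsConnected Γ)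
    (r R' : ℝ) (hr : 0 < r) (hrR : r < R')
    (hΓann : Γ ⊆ {x : EuclideanSpace ℝ (Fin m) | r < ‖x‖ ∧ ‖x‖ < R'})
    (hΓsep : Bornology.IsBounded
      (connectedComponentIn Γᶜ (0 : EuclideanSpace ℝ (Fin m)))) :
    IsOpen (connectedComponentIn Γᶜ (0 : EuclideanSpace ℝ (Fin m))) ∧
    IsConnected (connectedComponentIn Γᶜ (0 : EuclideanSpace ℝ (Fin m))) ∧
    Bornology.IsBounded (connectedComponentIn Γᶜ (0 : EuclideanSpace ℝ (Fin m))) ∧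
    (∀ y ∈ (connectedComponentIn Γᶜ (0 : EuclideanSpace ℝ (Fin m)))ᶜ,
      ¬ Bornology.IsBounded
        (connectedComponentIn (connectedComponentIn Γᶜ (0 : EuclideanSpace ℝ (Fin m)))ᶜ y)) ∧
    Metric.closedBall (0 : EuclideanSpace ℝ (Fin m)) r ⊆
      connectedComponentIn Γᶜ (0 : EuclideanSpace ℝ (Fin m)) ∧
    connectedComponentIn Γᶜ (0 : EuclideanSpace ℝ (Fin m)) ⊆
      Metric.ball (0 : EuclideanSpace ℝ (Fin m)) R' ∧
    frontier (connectedComponentIn Γᶜ (0 : EuclideanSpace ℝ (Fin m))) ⊆ Γ := by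
  set G := connectedComponentIn Γᶜ (0 : EuclideanSpace ℝ (Fin m)) with hG
  have i0 : Fin m := ⟨0, by omega⟩
  have hΓopen : IsOpen (Γᶜ : Set (EuclideanSpace ℝ (Fin m))) := hΓcompact.isClosed.isOpen_compl
  have h0 : (0 : EuclideanSpace ℝ (Fin m)) ∈ Γᶜ := by
    intro h
    have := (hΓann h).1
    simp only [norm_zero] at this
    linarith
  have hGopen : IsOpen G := hΓopen.connectedComponentIn
  have hGconn : IsConnected G := isConnected_connectedComponentIn_iff.mpr h0
  have hrank : 1 < Module.rank ℝ (EuclideanSpace ℝ (Fin m)) := by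
    have h1 : Module.finrank ℝ (EuclideanSpace ℝ (Fin m)) = m := finrank_euclideanSpace_fin
    rw [← Module.finrank_eq_rank, h1]
    exact_mod_cast (by omega : 1 < m)
  have hR'pos : (0 : ℝ) < R' := lt_trans hr hrR
  -- the far set A = {x | R' ≤ ‖x‖}
  set A : Set (EuclideanSpace ℝ (Fin m)) := {x | R' ≤ ‖x‖} with hAdef
  have hAsubΓc : A ⊆ Γᶜ := by
    intro x hx hxΓ
    exact absurd (hΓann hxΓ).2 (not_lt.mpr hx)
  have hAunbounded : ¬ Bornology.IsBounded A := by
    intro hb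
    obtain ⟨C, hC⟩ := hb.exists_norm_le
    have hcpos : (0 : ℝ) < max C R' + 1 := by
      have := le_max_right C R'; linarith
    have hnorm : ‖(EuclideanSpace.single i0 (max C R' + 1) : EuclideanSpace ℝ (Fin m))‖
        = max C R' + 1 := by
      rw [EuclideanSpace.norm_single, Real.norm_eq_abs, abs_of_pos hcpos]
    have hxA : (EuclideanSpace.single i0 (max C R' + 1) : EuclideanSpace ℝ (Fin m)) ∈ A := by
      show R' ≤ _
      rw [hnorm]
      have := le_max_right C R'; linarith
    have := hC _ hxA
    rw [hnorm] at this
    have := le_max_left C R'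
    linarith
  -- A is preconnected
  have hApre : IsPreconnected A := by
    have hx₀sphere : (EuclideanSpace.single i0 R' : EuclideanSpace ℝ (Fin m))
        ∈ sphere (0 : EuclideanSpace ℝ (Fin m)) R' := by
      rw [mem_sphere_iff_norm, sub_zero, EuclideanSpace.norm_single, Real.norm_eq_abs,
        abs_of_pos hR'pos]
    apply isPreconnected_of_forall (EuclideanSpace.single i0 R')
    intro y hy
    have hyA : R' ≤ ‖y‖ := hy
    have hynorm : (0 : ℝ) < ‖y‖ := lt_of_lt_of_le hR'pos hyA
    have hx₁sphere : (R' / ‖y‖) • y ∈ sphere (0 : EuclideanSpace ℝ (Fin m)) R' := by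
      rw [mem_sphere_iff_norm, sub_zero, norm_smul, Real.norm_eq_abs,
        abs_of_pos (by positivity), div_mul_cancel₀ _ (ne_of_gt hynorm)]
    refine ⟨sphere (0 : EuclideanSpace ℝ (Fin m)) R' ∪ segment ℝ ((R' / ‖y‖) • y) y, ?_,
      Or.inl hx₀sphere, Or.inr (right_mem_segment ℝ _ y), ?_⟩
    · rintro z (hz | hz)
      · rw [mem_sphere_iff_norm, sub_zero] at hz
        exact le_of_eq hz.symm
      · obtain ⟨a, b, ha, hb, hab, rfl⟩ := hz
        have heq : a • ((R' / ‖y‖) • y) + b • y = (a * (R' / ‖y‖) + b) • y := by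
          rw [smul_smul, add_smul]
        have hcoef : (0 : ℝ) ≤ a * (R' / ‖y‖) + b := by positivity
        show R' ≤ ‖a • ((R' / ‖y‖) • y) + b • y‖
        rw [heq, norm_smul, Real.norm_eq_abs, abs_of_nonneg hcoef]
        have h4 : R' / ‖y‖ * ‖y‖ = R' := div_mul_cancel₀ _ (ne_of_gt hynorm)
        have h3 : (a * (R' / ‖y‖) + b) * ‖y‖ = a * R' + b * ‖y‖ := by
          calc (a * (R' / ‖y‖) + b) * ‖y‖ = a * (R' / ‖y‖ * ‖y‖) + b * ‖y‖ := by ring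
          _ = a * R' + b * ‖y‖ := by rw [h4]
        rw [h3]
        nlinarith
    · exact IsPreconnected.union _ hx₁sphere (left_mem_segment ℝ _ y)
        (isPreconnected_sphere hrank 0 R') (convex_segment _ y).isPreconnected
  -- G ⊆ ball 0 R'
  have hGball : G ⊆ ball (0 : EuclideanSpace ℝ (Fin m)) R' := by
    intro x hx
    rw [mem_ball, dist_zero_right]
    by_contra h
    push_neg at h
    have hxA : x ∈ A := h
    have hGx : G = connectedComponentIn Γᶜ x := connectedComponentIn_eq hx
    have hAG : A ⊆ G := by
      rw [hGx]
      exact hApre.subset_connectedComponentIn hxA hAsubΓc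
    exact hAunbounded (hΓsep.subset hAG)
  -- closedBall 0 r ⊆ G
  have hball : closedBall (0 : EuclideanSpace ℝ (Fin m)) r ⊆ G := by
    apply (convex_closedBall (0 : EuclideanSpace ℝ (Fin m)) r).isPreconnected.subset_connectedComponentIn
      (mem_closedBall_self hr.le)
    intro x hx hxΓ
    rw [mem_closedBall, dist_zero_right] at hx
    exact absurd (hΓann hxΓ).1 (not_lt.mpr hx)
  -- frontier G ⊆ Γ
  have hfront : frontier G ⊆ Γ := by
    intro z hz
    rw [hGopen.frontier_eq] at hz
    by_contra hzΓ
    exact hz.2 (aux_closure_connectedComponentIn hΓopen 0 ⟨hz.1, hzΓ⟩)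
  -- Gᶜ is preconnected
  obtain ⟨p, hpΓ⟩ := hΓconn.nonempty
  have hΓGc : Γ ⊆ Gᶜ := fun x hx hxG => (connectedComponentIn_subset Γᶜ 0 hxG) hx
  have hGcpre : IsPreconnected (Gᶜ : Set (EuclideanSpace ℝ (Fin m))) := by
    apply isPreconnected_of_forall p
    intro y hy
    by_cases hyΓ : y ∈ Γ
    · exact ⟨Γ, hΓGc, hpΓ, hyΓ, hΓconn.isPreconnected⟩
    · have hyΓc : y ∈ (Γᶜ : Set (EuclideanSpace ℝ (Fin m))) := hyΓ
      have hyD : y ∈ connectedComponentIn Γᶜ y := mem_connectedComponentIn hyΓc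
      have hDG : ∀ z, z ∈ connectedComponentIn Γᶜ y → z ∉ G := by
        intro z hzD hzG
        have h1 := connectedComponentIn_eq hzD
        have h2 := connectedComponentIn_eq hzG
        have : y ∈ G := by
          rw [hG, h2, ← h1]
          exact hyD
        exact hy this
      have hclos : closure (connectedComponentIn Γᶜ y) ⊆ Γ ∪ connectedComponentIn Γᶜ y := by
        intro z hz
        by_cases hzΓ : z ∈ Γ
        · exact Or.inl hzΓ
        · exact Or.inr (aux_closure_connectedComponentIn hΓopen y ⟨hz, hzΓ⟩)
      have htsub : Γ ∪ closure (connectedComponentIn Γᶜ y) ⊆ Gᶜ := by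
        rintro z (hz | hz)
        · exact hΓGc hz
        · rcases hclos hz with h | h
          · exact hΓGc h
          · exact hDG z h
      have hDopen : IsOpen (connectedComponentIn Γᶜ y) := hΓopen.connectedComponentIn
      have hex : ∃ z, z ∈ closure (connectedComponentIn Γᶜ y) ∧ z ∈ Γ := by
        by_contra hc
        push_neg at hc
        have hcleq : closure (connectedComponentIn Γᶜ y) = connectedComponentIn Γᶜ y :=
          Subset.antisymm (fun z hz => (hclos hz).resolve_left (hc z hz)) subset_closure
        have hclopen : IsClopen (connectedComponentIn Γᶜ y) :=
          ⟨hcleq ▸ isClosed_closure, hDopen⟩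
        rcases isClopen_iff.mp hclopen with h | h
        · exact (Set.Nonempty.ne_empty ⟨y, hyD⟩) h
        · exact (connectedComponentIn_subset Γᶜ y) (h ▸ mem_univ p) hpΓ
      obtain ⟨z, hzcl, hzΓ'⟩ := hex
      exact ⟨Γ ∪ closure (connectedComponentIn Γᶜ y), htsub, Or.inl hpΓ,
        Or.inr (subset_closure hyD),
        IsPreconnected.union z hzΓ' hzcl hΓconn.isPreconnected
          isPreconnected_connectedComponentIn.closure⟩
  -- topological convexity
  have hconv : ∀ y ∈ (Gᶜ : Set (EuclideanSpace ℝ (Fin m))),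
      ¬ Bornology.IsBounded (connectedComponentIn Gᶜ y) := by
    intro y hy hb
    rw [hGcpre.connectedComponentIn hy] at hb
    have hAGc : A ⊆ Gᶜ := by
      intro x hx hxG
      have := hGball hxG
      rw [mem_ball, dist_zero_right] at this
      exact absurd this (not_lt.mpr hx)
    exact hAunbounded (hb.subset hAGc)
  exact ⟨hGopen, hGconn, hΓsep, hconv, hball, hGball, hfront⟩
end
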